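/- arXiv:1412.7558 — 10 statements merged into one kernel-verified Lean document; each statement's English description precedes it below -/
import Mathlib

section
/- Let U be a finite set and let F ⊆ 2^U be a family of subsets such that for all X₁, X₂ ∈ F, if there exist x₁ ∈ X₁ \ X₂ and x₂ ∈ X₂ \ X₁, then no member Y ∈ F contains both x₁ and x₂. Then |F| ≤ |U| + 1. -/
/-!
Induct on the ground set. Removing a point `a` from every member keeps the TP property, and
`X ↦ X \ {a}` identifies at most one pair of members: if `Z`, `Z ∪ {a}`, `W`, `W ∪ {a}` all lie
in `F` with `a ∉ Z, W`, then a point `z ∈ Z \ W` would clash with `a ∈ (W ∪ {a}) \ Z` inside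
`Z ∪ {a}`, so `Z ⊆ W`, and symmetrically `W ⊆ Z`. Hence deleting a point costs at most one set.
-/

open Finset

section

variable {α β : Type*} [DecidableEq α]

def IsTPSetSystem (F : Finset (Finset α)) : Prop :=
  ∀ X₁ ∈ F, ∀ X₂ ∈ F, ∀ x₁ ∈ X₁ \ X₂, ∀ x₂ ∈ X₂ \ X₁, ∀ Y ∈ F, ¬(x₁ ∈ Y ∧ x₂ ∈ Y)

theorem Finset.card_le_card_image_add_one_of_injOn_erase [DecidableEq β] {f : α → β}
    {s : Finset α} {x : α} (hf : Set.InjOn f (s.erase x)) : #s ≤ #(s.image f) + 1 :=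
  calc #s ≤ #(s.erase x) + 1 := by have := pred_card_le_card_erase (s := s) (a := x); omega
    _ = #((s.erase x).image f) + 1 := by rw [card_image_of_injOn hf]
    _ ≤ #(s.image f) + 1 := by gcongr; exact erase_subset x s

theorem Finset.eq_erase_or_eq_insert_erase (A : Finset α) (a : α) :
    A = A.erase a ∨ A = insert a (A.erase a) := by
  by_cases ha : a ∈ A
  · exact .inr (insert_erase ha).symm
  · exact .inl (erase_eq_of_notMem ha).symm

namespace IsTPSetSystem

variable {F : Finset (Finset α)}

theorem image_erase (hF : IsTPSetSystem F) (a : α) : IsTPSetSystem (F.image (·.erase a)) := by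
  simp only [IsTPSetSystem, forall_mem_image, mem_sdiff, mem_erase]
  intro X₁ hX₁ X₂ hX₂ x₁ hx₁ x₂ hx₂ Y hY hxY
  exact hF X₁ hX₁ X₂ hX₂ x₁ (by grind) x₂ (by grind) Y hY ⟨hxY.1.2, hxY.2.2⟩

theorem subset_of_insert_mem (hF : IsTPSetSystem F) {a : α} {Z W : Finset α} (hZ : Z ∈ F)
    (haZ : a ∉ Z) (haZ' : insert a Z ∈ F) (haW : insert a W ∈ F) : Z ⊆ W := by
  intro z hz
  by_contra hzW
  have hza : z ≠ a := by rintro rfl; exact haZ hz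
  exact hF (insert a W) haW Z hZ a (by simp [haZ]) z (by simp [hz, hza, hzW]) (insert a Z) haZ'
    ⟨mem_insert_self a Z, mem_insert_of_mem hz⟩

theorem eq_of_insert_mem (hF : IsTPSetSystem F) {a : α} {Z W : Finset α} (hZ : Z ∈ F)
    (hW : W ∈ F) (haZ : a ∉ Z) (haW : a ∉ W) (haZ' : insert a Z ∈ F)
    (haW' : insert a W ∈ F) : Z = W :=
  (hF.subset_of_insert_mem hZ haZ haZ' haW').antisymm (hF.subset_of_insert_mem hW haW haW' haZ')

theorem exists_injOn_erase (hF : IsTPSetSystem F) (a : α) :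
    ∃ X, Set.InjOn (fun A : Finset α ↦ A.erase a) ↑(F.erase X) := by
  have collision {A B : Finset α} (hA : A ∈ F) (hB : B ∈ F) (hAB : A.erase a = B.erase a)
      (hne : A ≠ B) : B.erase a ∈ F ∧ insert a (B.erase a) ∈ F := by
    rcases A.eq_erase_or_eq_insert_erase a with h | h <;>
      rcases B.eq_erase_or_eq_insert_erase a with h' | h' <;>
      rw [hAB] at h
    · exact absurd (h.trans h'.symm) hne
    · exact ⟨h ▸ hA, h' ▸ hB⟩
    · exact ⟨h' ▸ hB, h ▸ hA⟩
    · exact absurd (h.trans h'.symm) hne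
  by_cases hinj : Set.InjOn (fun A : Finset α ↦ A.erase a) ↑F
  · exact ⟨∅, hinj.mono (by simp)⟩
  simp only [Set.InjOn, not_forall, mem_coe] at hinj
  obtain ⟨A, hA, B, hB, hAB, hne⟩ := hinj
  obtain ⟨hZ, hZ'⟩ := collision hA hB hAB hne
  refine ⟨insert a (B.erase a),
    fun C hC D hD (hCD : C.erase a = D.erase a) ↦ by_contra fun hne' ↦ ?_⟩
  simp only [coe_erase, Set.mem_sdiff, mem_coe, Set.mem_singleton_iff] at hC hD
  obtain ⟨hW, hW'⟩ := collision hC.1 hD.1 hCD hne'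
  have hWZ := hF.eq_of_insert_mem hW hZ (notMem_erase a D) (notMem_erase a B) hW' hZ'
  have hC' := (C.eq_erase_or_eq_insert_erase a).resolve_right fun h ↦ hC.2 (by rw [h, hCD, hWZ])
  have hD' := (D.eq_erase_or_eq_insert_erase a).resolve_right fun h ↦ hD.2 (by rw [h, hWZ])
  exact hne' (hC'.trans (hCD.trans hD'.symm))

theorem card_le_card_image_erase_add_one (hF : IsTPSetSystem F) (a : α) :
    #F ≤ #(F.image (·.erase a)) + 1 :=
  have ⟨_, hinj⟩ := hF.exists_injOn_erase a
  card_le_card_image_add_one_of_injOn_erase hinj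

theorem card_le_card_add_one_of_forall_subset (hF : IsTPSetSystem F) {S : Finset α}
    (hS : ∀ X ∈ F, X ⊆ S) : #F ≤ #S + 1 := by
  induction S using Finset.induction_on generalizing F with
  | empty =>
    simp only [subset_empty] at hS
    simpa using card_le_one.2 fun X hX Y hY ↦ (hS X hX).trans (hS Y hY).symm
  | @insert a S haS ih =>
    have hS' : ∀ X ∈ F.image (·.erase a), X ⊆ S := by
      simp only [forall_mem_image]
      intro X hX
      simpa [erase_insert haS] using erase_subset_erase a (hS X hX)
    calc #F ≤ #(F.image (·.erase a)) + 1 := hF.card_le_card_image_erase_add_one a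
      _ ≤ #S + 1 + 1 := by gcongr; exact ih (hF.image_erase a) hS'
      _ = #(insert a S) + 1 := by rw [card_insert_of_notMem haS]

end IsTPSetSystem

end

/-- A TP-set system `F` over a finite ground set `U` has
cardinality at most `|U| + 1`. -/
theorem tp_set_system_card_le {U : Type*} [Fintype U] [DecidableEq U]
    (F : Finset (Finset U))
    (hTP : ∀ X₁ ∈ F, ∀ X₂ ∈ F, ∀ x₁ ∈ X₁ \ X₂, ∀ x₂ ∈ X₂ \ X₁,
      ∀ Y ∈ F, ¬(x₁ ∈ Y ∧ x₂ ∈ Y)) :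
    F.card ≤ Fintype.card U + 1 :=
  IsTPSetSystem.card_le_card_add_one_of_forall_subset hTP fun X _ ↦ subset_univ X
end

section
/- Let G be a graph containing a true twin class T with |T| ≥ 2k + 5, let v ∈ T, and suppose F is an editing set for G − v with |F| ≤ k (i.e., (G − v) △ F is trivially perfect). Then G △ F is trivially perfect. Consequently (G, k) is a yes-instance of Trivially Perfect Editing if and only if (G − v, k) is. -/
def IsInducedP4 {V : Type*} (G : SimpleGraph V) (a b c d : V) : Prop :=
  G.Adj a b ∧ G.Adj b c ∧ G.Adj c d ∧
  ¬G.Adj a c ∧ ¬G.Adj a d ∧ ¬G.Adj b d ∧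
  a ≠ b ∧ a ≠ c ∧ a ≠ d ∧ b ≠ c ∧ b ≠ d ∧ c ≠ d

def IsInducedC4 {V : Type*} (G : SimpleGraph V) (a b c d : V) : Prop :=
  G.Adj a b ∧ G.Adj b c ∧ G.Adj c d ∧ G.Adj d a ∧
  ¬G.Adj a c ∧ ¬G.Adj b d ∧
  a ≠ b ∧ a ≠ c ∧ a ≠ d ∧ b ≠ c ∧ b ≠ d ∧ c ≠ d

/-- A graph is trivially perfect if it has no induced `P₄` and no induced `C₄`. -/
def TriviallyPerfect {V : Type*} (G : SimpleGraph V) : Prop :=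
  ∀ a b c d : V, ¬IsInducedP4 G a b c d ∧ ¬IsInducedC4 G a b c d


def TrueTwins {V : Type*} (G : SimpleGraph V) (u v : V) : Prop :=
  ∀ w : V, (w = u ∨ G.Adj u w) ↔ (w = v ∨ G.Adj v w)

/-!
`F` touches at most `2k` vertices, so for any four vertices some `u ∈ T` avoids both them and the
edits; then `u` and `v` are still true twins in `G △ F`. Swapping true twins is an automorphism,
so it carries an induced `P₄` or `C₄` of `G △ F` through `v` to one avoiding `v`, which cannot
exist since `(G − v) △ F` is trivially perfect. Restricting and extending editing sets along
`V − v ↪ V` gives the equivalence of the two instances.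
-/

namespace SimpleGraph

variable {V W : Type*} {G : SimpleGraph V} {G' : SimpleGraph W}

theorem ncard_support_le_two_mul_ncard_edgeSet [Finite V] (G : SimpleGraph V) :
    G.support.ncard ≤ 2 * G.edgeSet.ncard := by
  classical
  have := Fintype.ofFinite V
  have hsupp : G.support = Set.range fun d : G.Dart ↦ d.fst :=
    Set.ext fun x ↦ ⟨fun ⟨y, hxy⟩ ↦ ⟨⟨(x, y), hxy⟩, rfl⟩, fun ⟨d, hd⟩ ↦ hd ▸ d.adj.mem_support_left⟩
  calc G.support.ncard ≤ Nat.card G.Dart := hsupp ▸ Finite.card_range_le _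
    _ = 2 * G.edgeSet.ncard := by
      rw [Nat.card_eq_fintype_card, dart_card_eq_twice_card_edges, ← Set.ncard_coe_finset,
        coe_edgeFinset]

theorem Embedding.ncard_edgeSet_le [Finite W] (f : G ↪g G') :
    G.edgeSet.ncard ≤ G'.edgeSet.ncard :=
  Nat.card_le_card_of_injective f.mapEdgeSet f.mapEdgeSet.injective

theorem induce_symmDiff (s : Set V) (G F : SimpleGraph V) :
    (symmDiff G F).induce s = symmDiff (G.induce s) (F.induce s) := by
  ext; simp [symmDiff_def]

end SimpleGraph

open SimpleGraph

section InducedSubgraphs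

variable {V W : Type*} {G : SimpleGraph V} {G' : SimpleGraph W}

theorem isInducedP4_map_iff (f : G ↪g G') {a b c d : V} :
    IsInducedP4 G' (f a) (f b) (f c) (f d) ↔ IsInducedP4 G a b c d := by
  simp only [IsInducedP4, f.map_adj_iff, f.injective.ne_iff]

theorem isInducedC4_map_iff (f : G ↪g G') {a b c d : V} :
    IsInducedC4 G' (f a) (f b) (f c) (f d) ↔ IsInducedC4 G a b c d := by
  simp only [IsInducedC4, f.map_adj_iff, f.injective.ne_iff]

theorem TriviallyPerfect.of_embedding (f : G ↪g G') (h : TriviallyPerfect G') :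
    TriviallyPerfect G := fun a b c d ↦ by
  simpa only [isInducedP4_map_iff, isInducedC4_map_iff] using h (f a) (f b) (f c) (f d)

theorem TriviallyPerfect.not_isInduced_of_mem {s : Set V} (h : TriviallyPerfect (G.induce s))
    {a b c d : V} (ha : a ∈ s) (hb : b ∈ s) (hc : c ∈ s) (hd : d ∈ s) :
    ¬IsInducedP4 G a b c d ∧ ¬IsInducedC4 G a b c d := by
  have := h ⟨a, ha⟩ ⟨b, hb⟩ ⟨c, hc⟩ ⟨d, hd⟩
  rwa [← isInducedP4_map_iff (Embedding.induce s), ← isInducedC4_map_iff (Embedding.induce s)]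
    at this

end InducedSubgraphs

section Twins

variable {V : Type*} {G : SimpleGraph V} {u v : V}

theorem TrueTwins.adj_iff (h : TrueTwins G u v) {w : V} (hu : w ≠ u) (hv : w ≠ v) :
    G.Adj u w ↔ G.Adj v w := by
  simpa [hu, hv] using h w

theorem TrueTwins.swap_adj_iff [DecidableEq V] (h : TrueTwins G u v) (x y : V) :
    G.Adj (Equiv.swap u v x) (Equiv.swap u v y) ↔ G.Adj x y := by
  have hadj := @h.adj_iff
  by_cases hxu : x = u <;> by_cases hxv : x = v <;> by_cases hyu : y = u <;>
    by_cases hyv : y = v <;>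
    simp_all [Equiv.swap_apply_of_ne_of_ne, adj_comm]

def TrueTwins.swapIso [DecidableEq V] (h : TrueTwins G u v) : G ≃g G :=
  ⟨Equiv.swap u v, h.swap_adj_iff _ _⟩

theorem TrueTwins.symmDiff (h : TrueTwins G u v) {F : SimpleGraph V} (hu : ∀ w, ¬F.Adj u w)
    (hv : ∀ w, ¬F.Adj v w) : TrueTwins (symmDiff G F) u v := fun w ↦ by
  simpa [symmDiff_def, hu w, hv w] using h w

theorem TriviallyPerfect.of_induce_ne_of_twins
    (hTP : TriviallyPerfect (G.induce {x | x ≠ v}))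
    (htwins : ∀ s : Finset V, s.card ≤ 4 → ∃ u ∉ s, TrueTwins G u v) :
    TriviallyPerfect G := by
  classical
  intro a b c d
  obtain ⟨u, hus, huv⟩ := htwins {a, b, c, d} Finset.card_le_four
  let σ := huv.swapIso.toEmbedding
  have hσ : ∀ x ∈ ({a, b, c, d} : Finset V), σ x ≠ v := fun x hx h ↦ hus <| by
    rw [show σ x = Equiv.swap u v x from rfl, Equiv.swap_apply_eq_iff, Equiv.swap_apply_right] at h
    exact h ▸ hx
  have := hTP.not_isInduced_of_mem (hσ a (by simp)) (hσ b (by simp)) (hσ c (by simp))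
    (hσ d (by simp))
  rwa [isInducedP4_map_iff, isInducedC4_map_iff] at this

end Twins

theorem triviallyPerfect_symmDiff_of_twin_class {V : Type*} [Finite V] {G F : SimpleGraph V}
    {k : ℕ} {T : Set V} {v : V} (hpair : ∀ u ∈ T, ∀ w ∈ T, TrueTwins G u w)
    (hbig : 2 * k + 5 ≤ T.ncard) (hv : v ∈ T) (hFv : ∀ w, ¬F.Adj v w)
    (hFk : F.edgeSet.ncard ≤ k) (hTP : TriviallyPerfect ((symmDiff G F).induce {x | x ≠ v})) :
    TriviallyPerfect (symmDiff G F) := by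
  refine hTP.of_induce_ne_of_twins fun s hs ↦ ?_
  have hcard : (F.support ∪ s).ncard < T.ncard := calc
    (F.support ∪ s).ncard ≤ F.support.ncard + s.card := by
      simpa only [Set.ncard_coe_finset] using Set.ncard_union_le F.support s
    _ ≤ 2 * k + 4 := by have := F.ncard_support_le_two_mul_ncard_edgeSet; omega
    _ < T.ncard := by omega
  obtain ⟨u, huT, hu⟩ := Set.exists_mem_notMem_of_ncard_lt_ncard hcard
  rw [Set.mem_union, not_or, Finset.mem_coe] at hu
  exact ⟨u, hu.2, (hpair u huT v hv).symmDiff (fun w huw ↦ hu.1 huw.mem_support_left) hFv⟩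

theorem twin_class_reduction_safe_general {V : Type*} [Fintype V]
    (G : SimpleGraph V) (k : ℕ) (T : Set V)
    (hpair : ∀ u ∈ T, ∀ w ∈ T, TrueTwins G u w)
    (hbig : 2 * k + 5 ≤ T.ncard)
    (v : V) (hv : v ∈ T)
    (F : SimpleGraph V) (hFv : ∀ w : V, ¬F.Adj v w)
    (hFk : F.edgeSet.ncard ≤ k)
    (hTP : TriviallyPerfect ((symmDiff G F).induce {x : V | x ≠ v})) :
    TriviallyPerfect (symmDiff G F) ∧
      ((∃ F₁ : SimpleGraph V, F₁.edgeSet.ncard ≤ k ∧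
          TriviallyPerfect (symmDiff G F₁)) ↔
        (∃ F₂ : SimpleGraph {x : V | x ≠ v},
          F₂.edgeSet.ncard ≤ k ∧
          TriviallyPerfect (symmDiff (G.induce {x : V | x ≠ v}) F₂))) := by
  refine ⟨triviallyPerfect_symmDiff_of_twin_class hpair hbig hv hFv hFk hTP, ?_, ?_⟩
  · rintro ⟨F₁, hF₁k, hF₁⟩
    refine ⟨F₁.induce _, (Embedding.induce _).ncard_edgeSet_le.trans hF₁k, ?_⟩
    rw [← induce_symmDiff]
    exact hF₁.of_embedding (Embedding.induce _)
  · rintro ⟨F₂, hF₂k, hF₂⟩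
    let F₁ := F₂.map (Function.Embedding.subtype _)
    have hF₁v : ∀ w, ¬F₁.Adj v w := by
      rintro w hvw
      obtain ⟨a, _, _, hav, _⟩ := (map_adj _ _ _ _).mp hvw
      exact a.2 hav
    have hF₁k : F₁.edgeSet.ncard ≤ k := by
      rw [edgeSet_map]
      exact (Set.ncard_image_le (Set.toFinite _)).trans hF₂k
    refine ⟨F₁, hF₁k, triviallyPerfect_symmDiff_of_twin_class hpair hbig hv hF₁v hF₁k ?_⟩
    rwa [induce_symmDiff, show F₁.induce _ = F₂ from comap_map_eq _ _]

/-- If `T` is a true twin class of size at least `2k + 5`,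
`v ∈ T`, and `F` is an editing set of size at most `k` for `G − v`
(`F` not incident to `v`), then `G △ F` is trivially perfect; consequently
`(G, k)` and `(G − v, k)` are equivalent instances of editing. -/
theorem twin_class_reduction_safe {V : Type*} [Fintype V] [DecidableEq V]
    (G : SimpleGraph V) (k : ℕ) (T : Set V)
    (hpair : ∀ u ∈ T, ∀ w ∈ T, TrueTwins G u w)
    (hmax : ∀ w : V, (∀ u ∈ T, TrueTwins G u w) → w ∈ T)
    (hbig : 2 * k + 5 ≤ T.ncard)
    (v : V) (hv : v ∈ T)
    (F : SimpleGraph V) (hFv : ∀ w : V, ¬F.Adj v w)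
    (hFk : F.edgeSet.ncard ≤ k)
    (hTP : TriviallyPerfect ((symmDiff G F).induce {x : V | x ≠ v})) :
    TriviallyPerfect (symmDiff G F) ∧
      ((∃ F₁ : SimpleGraph V, F₁.edgeSet.ncard ≤ k ∧
          TriviallyPerfect (symmDiff G F₁)) ↔
        (∃ F₂ : SimpleGraph {x : V | x ≠ v},
          F₂.edgeSet.ncard ≤ k ∧
          TriviallyPerfect (symmDiff (G.induce {x : V | x ≠ v}) F₂))) :=
  twin_class_reduction_safe_general G k T hpair hbig v hv F hFv hFk hTP
end

section
/- Let G be a graph, M ⊆ V(G) a module of G such that G[M] has no induced P₄, and let W ⊆ V(G) with |W| = 4 be such that G[W] is an induced P₄. Then |W ∩ M| ≤ 1. -/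
/-- `M` is a module of `G`. -/
def IsModule {V : Type*} (G : SimpleGraph V) (M : Set V) : Prop :=
  ∀ v ∉ M, (∀ m ∈ M, G.Adj v m) ∨ (∀ m ∈ M, ¬G.Adj v m)

section

variable {V : Type*} {G : SimpleGraph V} {M : Set V}

theorem IsModule.mem_of_adj_of_not_adj (hM : IsModule G M) {x y v : V} (hx : x ∈ M) (hy : y ∈ M)
    (hvx : G.Adj v x) (hvy : ¬G.Adj v y) : v ∈ M := by
  by_contra hv
  rcases hM v hv with hadj | hnadj
  · exact hvy (hadj y hy)
  · exact hnadj x hx hvx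

theorem IsInducedP4.reverse {a b c d : V} (h : IsInducedP4 G a b c d) : IsInducedP4 G d c b a := by
  obtain ⟨hab, hbc, hcd, hac, had, hbd, hab', hac', had', hbc', hbd', hcd'⟩ := h
  exact ⟨hcd.symm, hbc.symm, hab.symm, (hbd ·.symm), (had ·.symm), (hac ·.symm),
    hcd'.symm, hbd'.symm, had'.symm, hbc'.symm, hac'.symm, hab'.symm⟩

theorem IsInducedP4.all_mem_of_first_two_mem (hM : IsModule G M) {a b c d : V}
    (h : IsInducedP4 G a b c d) (ha : a ∈ M) (hb : b ∈ M) :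
    a ∈ M ∧ b ∈ M ∧ c ∈ M ∧ d ∈ M := by
  obtain ⟨-, hbc, hcd, hac, -, hbd, -⟩ := h
  have hc : c ∈ M := hM.mem_of_adj_of_not_adj hb ha hbc.symm (hac ·.symm)
  have hd : d ∈ M := hM.mem_of_adj_of_not_adj hc hb hcd.symm (hbd ·.symm)
  exact ⟨ha, hb, hc, hd⟩

theorem IsInducedP4.all_mem_of_two_mem (hM : IsModule G M) {a b c d : V}
    (h : IsInducedP4 G a b c d) {x y : V} (hx : x ∈ ({a, b, c, d} : Set V))
    (hy : y ∈ ({a, b, c, d} : Set V)) (hxy : x ≠ y) (hxM : x ∈ M) (hyM : y ∈ M) :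
    a ∈ M ∧ b ∈ M ∧ c ∈ M ∧ d ∈ M := by
  have of_ab := h.all_mem_of_first_two_mem hM
  have of_cd : c ∈ M → d ∈ M → a ∈ M ∧ b ∈ M ∧ c ∈ M ∧ d ∈ M := fun hc hd =>
    let ⟨hd, hc, hb, ha⟩ := h.reverse.all_mem_of_first_two_mem hM hd hc
    ⟨ha, hb, hc, hd⟩
  obtain ⟨hab, hbc, hcd, hac, had, hbd, -⟩ := h
  have of_bc : b ∈ M → c ∈ M → a ∈ M ∧ b ∈ M ∧ c ∈ M ∧ d ∈ M := fun hb hc =>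
    of_ab (hM.mem_of_adj_of_not_adj hb hc hab hac) hb
  have of_ac : a ∈ M → c ∈ M → a ∈ M ∧ b ∈ M ∧ c ∈ M ∧ d ∈ M := fun ha hc =>
    of_cd hc (hM.mem_of_adj_of_not_adj hc ha hcd.symm (had ·.symm))
  have of_ad : a ∈ M → d ∈ M → a ∈ M ∧ b ∈ M ∧ c ∈ M ∧ d ∈ M := fun ha hd =>
    of_ab ha (hM.mem_of_adj_of_not_adj ha hd hab.symm hbd)
  have of_bd : b ∈ M → d ∈ M → a ∈ M ∧ b ∈ M ∧ c ∈ M ∧ d ∈ M := fun hb hd =>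
    of_ab (hM.mem_of_adj_of_not_adj hb hd hab had) hb
  simp only [Set.mem_insert_iff, Set.mem_singleton_iff] at hx hy
  rcases hx with rfl | rfl | rfl | rfl <;> rcases hy with rfl | rfl | rfl | rfl <;>
    first
    | exact absurd rfl hxy
    | exact of_ab hxM hyM | exact of_ab hyM hxM | exact of_ac hxM hyM | exact of_ac hyM hxM
    | exact of_ad hxM hyM | exact of_ad hyM hxM | exact of_bc hxM hyM | exact of_bc hyM hxM
    | exact of_bd hxM hyM | exact of_bd hyM hxM | exact of_cd hxM hyM | exact of_cd hyM hxM

end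

/-- If `M` is a module with `G[M]` having no induced `P₄`, then any
induced `P₄` of `G` meets `M` in at most one vertex. -/
theorem inducedP4_inter_module {V : Type*} (G : SimpleGraph V) (M : Set V)
    (hM : IsModule G M)
    (hMP4 : ∀ a b c d : V, a ∈ M → b ∈ M → c ∈ M → d ∈ M → ¬IsInducedP4 G a b c d)
    (a b c d : V) (hP4 : IsInducedP4 G a b c d) :
    (({a, b, c, d} : Set V) ∩ M).ncard ≤ 1 := by
  have hfin : (({a, b, c, d} : Set V) ∩ M).Finite := (Set.toFinite _).inter_of_left M
  rw [Set.ncard_le_one hfin]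
  rintro x ⟨hx, hxM⟩ y ⟨hy, hyM⟩
  by_contra hxy
  obtain ⟨ha, hb, hc, hd⟩ := hP4.all_mem_of_two_mem hM hx hy hxy hxM hyM
  exact hMP4 a b c d ha hb hc hd hP4
end

section
/- Let H be a cycle on 3p vertices for some p > 1, and let F ⊆ (V(H) choose 2) be an editing set for H (i.e., H △ F is trivially perfect). Then |F| ≥ p. -/
/-- The cycle on `ZMod n` (vertices in cyclic order, `x` adjacent to `x ± 1`). -/
def cycleZ (n : ℕ) : SimpleGraph (ZMod n) where
  Adj x y := x ≠ y ∧ (y = x + 1 ∨ x = y + 1)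
  symm := by
    constructor
    intro x y h
    exact ⟨h.1.symm, h.2.symm⟩
  loopless := by
    constructor
    intro x h
    exact h.1 rfl

/-!
Cut the cycle into the `p` windows `3i, 3i+1, 3i+2, 3i+3`. Each window is an induced `P₄` of
the cycle, so an editing set must change one of its pairs other than the end pair `{3i, 3i+3}`
(changing only that pair creates an induced `C₄`). Pairs of this kind taken from different
windows are distinct, since they span less than the whole cycle.
-/

theorem SimpleGraph.symmDiff_adj {V : Type*} (G F : SimpleGraph V) (x y : V) :
    (symmDiff G F).Adj x y ↔ (G.Adj x y ↔ ¬F.Adj x y) := by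
  rw [symmDiff_def]
  simp only [SimpleGraph.sup_adj, SimpleGraph.sdiff_adj]
  tauto

theorem TriviallyPerfect.adj_of_isInducedP4 {V : Type*} {G F : SimpleGraph V}
    (hTP : TriviallyPerfect (symmDiff G F)) {a b c d : V} (hP : IsInducedP4 G a b c d) :
    F.Adj a b ∨ F.Adj b c ∨ F.Adj c d ∨ F.Adj a c ∨ F.Adj b d := by
  by_contra! hF
  have hP4 := (hTP a b c d).1
  have hC4 := (hTP a b c d).2
  simp only [IsInducedP4, IsInducedC4, SimpleGraph.symmDiff_adj] at hP hP4 hC4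
  by_cases had : F.Adj a d <;> grind [SimpleGraph.adj_comm]

theorem cycleZ_adj {n : ℕ} {x y : ZMod n} :
    (cycleZ n).Adj x y ↔ x ≠ y ∧ (y = x + 1 ∨ x = y + 1) := Iff.rfl

theorem isInducedP4_cycleZ {n : ℕ} (hn : 5 ≤ n) (a : ZMod n) :
    IsInducedP4 (cycleZ n) a (a + 1) (a + 2) (a + 3) := by
  have : NeZero n := ⟨by omega⟩
  have : Fact (1 < n) := ⟨by omega⟩
  simp only [IsInducedP4, cycleZ_adj, add_assoc, add_right_inj, left_eq_add, ne_eq]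
  norm_num
  simp (disch := omega) only [← (ZMod.val_injective n).eq_iff, ZMod.val_zero, ZMod.val_one,
    ZMod.val_ofNat, Nat.mod_eq_of_lt]
  omega

theorem exists_adj_of_triviallyPerfect_symmDiff_cycleZ {n : ℕ} (hn : 5 ≤ n)
    {F : SimpleGraph (ZMod n)} (hTP : TriviallyPerfect (symmDiff (cycleZ n) F)) (m : ℕ) :
    ∃ u v : ℕ, u < v ∧ v ≤ 3 ∧ v < u + 3 ∧
      F.Adj ((m + u : ℕ) : ZMod n) ((m + v : ℕ) : ZMod n) := by
  rcases hTP.adj_of_isInducedP4 (isInducedP4_cycleZ hn (m : ZMod n)) with h | h | h | h | h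
  · exact ⟨0, 1, by omega, by omega, by omega, by simpa using h⟩
  · exact ⟨1, 2, by omega, by omega, by omega, by simpa using h⟩
  · exact ⟨2, 3, by omega, by omega, by omega, by simpa using h⟩
  · exact ⟨0, 2, by omega, by omega, by omega, by simpa using h⟩
  · exact ⟨1, 3, by omega, by omega, by omega, by simpa using h⟩

theorem eq_of_window_pairs_eq {p i j u v u' v' : ℕ} (hi : i < p) (hj : j < p)
    (huv : u < v) (hv : v ≤ 3) (hvu : v < u + 3) (huv' : u' < v') (hv' : v' ≤ 3)
    (h : s(((3 * i + u : ℕ) : ZMod (3 * p)), ((3 * i + v : ℕ) : ZMod (3 * p))) =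
      s(((3 * j + u' : ℕ) : ZMod (3 * p)), ((3 * j + v' : ℕ) : ZMod (3 * p)))) :
    i = j := by
  rcases Sym2.eq_iff.1 h with ⟨h₁, -⟩ | ⟨h₁, h₂⟩
  · rw [ZMod.natCast_eq_natCast_iff', Nat.mod_eq_of_lt (by omega),
      Nat.mod_eq_of_lt (by omega)] at h₁
    omega
  · -- crossing pairs make the cycle length `3 * p` divide `(v - u) + (v' - u') ≤ 5`
    have hwind : ((v - u + (v' - u') : ℕ) : ZMod (3 * p)) = 0 := by
      push_cast [Nat.cast_sub huv.le, Nat.cast_sub huv'.le] at h₁ h₂ ⊢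
      linear_combination h₂ - h₁
    rw [ZMod.natCast_eq_zero_iff] at hwind
    have := Nat.le_of_dvd (by omega) hwind
    omega

/-- Any editing set for the cycle on `3p` vertices (`p > 1`) has
size at least `p`. -/
theorem cycle_editing_lower_bound (p : ℕ) (hp : 1 < p)
    (F : SimpleGraph (ZMod (3 * p)))
    (hTP : TriviallyPerfect (symmDiff (cycleZ (3 * p)) F)) :
    p ≤ F.edgeSet.ncard := by
  have : NeZero (3 * p) := ⟨by omega⟩
  choose u v huv hv hvu hF using fun i : ℕ =>
    exists_adj_of_triviallyPerfect_symmDiff_cycleZ (by omega) hTP (3 * i)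
  exact Set.le_ncard_of_inj_on_range
    (fun i => s(((3 * i + u i : ℕ) : ZMod (3 * p)), ((3 * i + v i : ℕ) : ZMod (3 * p))))
    (fun i _ => (SimpleGraph.mem_edgeSet F).2 (hF i))
    (fun i hi j hj hij => eq_of_window_pairs_eq hi hj (huv i) (hv i) (hvu i) (huv j) (hv j) hij)
end

section
/- Let H be a cycle on 3p vertices v₀, v₁, …, v__{3p−1} (in cyclic order) for p > 1, and let F be an editing set for H with |F| = p. Then F consists of deletions of every third edge of the cycle: either F = {v_{3i}v_{3i+1} : 0 ≤ i < p}, or F = {v_{3i+1}v_{3i+2} : 0 ≤ i < p}, or F = {v_{3i+2}v_{3i+3} : 0 ≤ i < p} (indices mod 3p). -/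
open Finset

theorem SimpleGraph.symmDiff_adj_of_not_adj {V : Type*} {G F : SimpleGraph V} {u v : V}
    (h : ¬F.Adj u v) : (symmDiff G F).Adj u v ↔ G.Adj u v := by
  simp [symmDiff_def, h]

theorem IsInducedP4.symmDiff_of_forall_not_adj {V : Type*} {G F : SimpleGraph V} {a b c d : V}
    (hP : IsInducedP4 G a b c d)
    (hF : ∀ u ∈ ({a, b, c, d} : Set V), ∀ v ∈ ({a, b, c, d} : Set V), ¬F.Adj u v) :
    IsInducedP4 (symmDiff G F) a b c d := by
  have hsame : ∀ u ∈ ({a, b, c, d} : Set V), ∀ v ∈ ({a, b, c, d} : Set V),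
      ((symmDiff G F).Adj u v ↔ G.Adj u v) :=
    fun u hu v hv => SimpleGraph.symmDiff_adj_of_not_adj (hF u hu v hv)
  simp (disch := simp) only [IsInducedP4, hsame]
  exact hP

namespace CycleEditing

variable {n : ℕ}

lemma add_natCast_inj (i : ZMod n) {a b : ℕ} (ha : a < n) (hb : b < n) :
    i + a = i + b ↔ a = b := by
  rw [add_right_inj, ZMod.natCast_eq_natCast_iff', Nat.mod_eq_of_lt ha, Nat.mod_eq_of_lt hb]

lemma cycleZ_adj_add_natCast (i : ZMod n) {a b : ℕ} (ha : a + 1 < n) (hb : b + 1 < n) :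
    (cycleZ n).Adj (i + a) (i + b) ↔ b = a + 1 ∨ a = b + 1 := by
  simp only [cycleZ, ne_eq, add_assoc, ← Nat.cast_add_one]
  simp (disch := omega) only [add_natCast_inj]
  omega

lemma cycleZ_isInducedP4 (hn : 5 ≤ n) (i : ZMod n) :
    IsInducedP4 (cycleZ n) i (i + 1) (i + 2) (i + 3) := by
  have h : IsInducedP4 (cycleZ n) (i + (0 : ℕ)) (i + (1 : ℕ)) (i + (2 : ℕ)) (i + (3 : ℕ)) := by
    simp (disch := omega) only [IsInducedP4, cycleZ_adj_add_natCast, ne_eq, add_natCast_inj]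
    decide
  simpa using h

lemma mk_add_one_injective (hn : 3 ≤ n) {a b : ZMod n} (h : s(a, a + 1) = s(b, b + 1)) :
    a = b := by
  rcases Sym2.eq_iff.1 h with ⟨rfl, -⟩ | ⟨rfl, h⟩
  · rfl
  · have h2 : ((2 : ℕ) : ZMod n) = 0 := by push_cast; linear_combination h
    rw [ZMod.natCast_eq_zero_iff] at h2
    exact absurd (Nat.le_of_dvd two_pos h2) (by omega)

lemma exists_eq_mk_add_one_of_adj {x y : ZMod n} (h : (cycleZ n).Adj x y) :
    ∃ m, s(x, y) = s(m, m + 1) := by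
  rcases h.2 with rfl | rfl
  exacts [⟨x, rfl⟩, ⟨y, Sym2.eq_swap⟩]

lemma val_sub_pos {x y : ZMod n} (hxy : x ≠ y) : 0 < (y - x).val :=
  Nat.pos_of_ne_zero fun h => hxy (sub_eq_zero.1 ((ZMod.val_eq_zero _).1 h)).symm

lemma card_filter_range_four_add_mod_le {d : ℕ} (hn : 6 ≤ n) (hd0 : 0 < d) (hd : d < n) :
    #{a ∈ range 4 | (a + d) % n < 4} ≤ 3 ∧
      (d ≠ 1 → d + 1 ≠ n → #{a ∈ range 4 | (a + d) % n < 4} ≤ 2) := by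
  have hmod (a : ℕ) (ha : a < 4) :
      (a + d) % n = a + d ∧ a + d < n ∨ (a + d) % n + n = a + d := by
    rcases lt_or_ge (a + d) n with h | h
    · exact Or.inl ⟨Nat.mod_eq_of_lt h, h⟩
    · right
      rw [Nat.mod_eq_sub_mod h, Nat.mod_eq_of_lt (by omega)]
      omega
  have := hmod 0 (by norm_num); have := hmod 1 (by norm_num)
  have := hmod 2 (by norm_num); have := hmod 3 (by norm_num)
  simp only [card_filter, sum_range_succ, sum_range_zero]
  split_ifs <;> omega

lemma add_three_iff {P : ZMod n → Prop} (hP : ∀ i, ∃! j : ℕ, j < 3 ∧ P (i + j)) (k : ZMod n) :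
    P (k + 3) ↔ P k := by
  constructor
  · intro hk
    obtain ⟨j, ⟨hj, hkj⟩, -⟩ := hP k
    obtain rfl : j = 0 := by
      by_contra hj0
      obtain ⟨j, rfl⟩ := Nat.exists_eq_succ_of_ne_zero hj0
      have := (hP (k + 1)).unique (y₁ := j) ⟨by omega, by convert hkj using 1; push_cast; ring⟩
        (y₂ := 2) ⟨by norm_num, by convert hk using 1; push_cast; ring⟩
      omega
    simpa using hkj
  · intro hk
    obtain ⟨j, ⟨hj, hkj⟩, -⟩ := hP (k + 1)
    obtain rfl : j = 2 := by
      by_contra hj2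
      have := (hP k).unique (y₁ := 0) ⟨by norm_num, by simpa using hk⟩
        (y₂ := j + 1) ⟨by omega, by convert hkj using 1; push_cast; ring⟩
      omega
    convert hkj using 1
    push_cast
    ring

lemma exists_forall_iff_val_mod_three {p : ℕ} (hp : 0 < p) {P : ZMod (3 * p) → Prop}
    (hP : ∀ i, ∃! j : ℕ, j < 3 ∧ P (i + j)) : ∃ r < 3, ∀ k, P k ↔ k.val % 3 = r := by
  have : NeZero (3 * p) := ⟨by omega⟩
  have hshift (a : ZMod (3 * p)) (t : ℕ) : P (a + 3 * t) ↔ P a := by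
    induction t with
    | zero => simp
    | succ t ih => rw [← ih, Nat.cast_succ, mul_add_one, ← add_assoc, add_three_iff hP]
  have hval (k : ZMod (3 * p)) : P k ↔ P (k.val % 3 : ℕ) := by
    conv_lhs => rw [← ZMod.natCast_zmod_val k, ← Nat.mod_add_div k.val 3]
    push_cast
    exact hshift _ _
  obtain ⟨r, ⟨hr, hPr⟩, huniq⟩ := hP 0
  refine ⟨r, hr, fun k => ?_⟩
  rw [hval k]
  exact ⟨fun hk => huniq _ ⟨Nat.mod_lt _ (by norm_num), by simpa using hk⟩,
    fun hk => by simpa [hk] using hPr⟩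

variable [NeZero n]

def window (n : ℕ) [NeZero n] (i : ZMod n) : Finset (ZMod n) := {v | (v - i).val < 4}

lemma mem_window {i v : ZMod n} : v ∈ window n i ↔ (v - i).val < 4 := by simp [window]

lemma add_natCast_mem_window (hn : 4 ≤ n) (i : ZMod n) {k : ℕ} (hk : k < 4) :
    i + k ∈ window n i := by
  rw [mem_window, add_sub_cancel_left, ZMod.val_natCast_of_lt (by omega)]
  exact hk

lemma mk_add_one_mem_window_sym2 (hn : 5 ≤ n) {i k : ZMod n} :
    s(k, k + 1) ∈ (window n i).sym2 ↔ ∃ j < 3, k = i + (j : ℕ) := by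
  rw [mk_mem_sym2_iff]
  constructor
  · rintro ⟨hk, hk1⟩
    have hki := ZMod.natCast_zmod_val (k - i)
    refine ⟨(k - i).val, ?_, by rw [hki]; ring⟩
    by_contra! h3
    have : (k - i).val = 3 := by rw [mem_window] at hk; omega
    rw [mem_window, show k + 1 - i = (((k - i).val + 1 : ℕ) : ZMod n) by push_cast [hki]; ring,
      this, ZMod.val_natCast_of_lt (by omega)] at hk1
    omega
  · rintro ⟨j, hj, rfl⟩
    rw [add_assoc, ← Nat.cast_add_one]
    exact ⟨add_natCast_mem_window (by omega) i (by omega),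
      add_natCast_mem_window (by omega) i (by omega)⟩

lemma exists_edge_mem_window (hn : 5 ≤ n) {F : SimpleGraph (ZMod n)}
    (hF : TriviallyPerfect (symmDiff (cycleZ n) F)) (i : ZMod n) :
    ∃ e ∈ F.edgeSet, e ∈ (window n i).sym2 := by
  by_contra! hnone
  refine (hF i (i + 1) (i + 2) (i + 3)).1
    ((cycleZ_isInducedP4 hn i).symmDiff_of_forall_not_adj ?_)
  have h k (hk : k < 4) := add_natCast_mem_window (by omega) i hk
  have hwin : ∀ v ∈ ({i, i + 1, i + 2, i + 3} : Set (ZMod n)), v ∈ window n i := by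
    rintro v (rfl | rfl | rfl | rfl)
    exacts [by simpa using h 0 (by norm_num), by simpa using h 1 (by norm_num),
      by simpa using h 2 (by norm_num), by simpa using h 3 (by norm_num)]
  exact fun u hu v hv huv => hnone _ huv (mk_mem_sym2_iff.2 ⟨hwin u hu, hwin v hv⟩)

lemma card_windows_eq (hn : 4 ≤ n) (x y : ZMod n) :
    #{i | s(x, y) ∈ (window n i).sym2} = #{a ∈ range 4 | (a + (y - x).val) % n < 4} := by
  have hval {a : ℕ} (ha : a < 4) : (a : ZMod n).val = a := ZMod.val_natCast_of_lt (by omega)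
  refine card_nbij' (fun i => (x - i).val) (fun a => x - a) ?_ ?_ ?_ ?_
  · intro i hi
    simp only [coe_filter, mem_univ, true_and, Set.mem_ofPred_eq, mk_mem_sym2_iff,
      mem_window] at hi
    simpa [← ZMod.val_add] using hi
  · intro a ha
    simp only [coe_filter, mem_range, Set.mem_ofPred_eq] at ha
    have hy : y - (x - a) = a + (y - x) := by ring
    simpa [mk_mem_sym2_iff, mem_window, hy, hval ha.1, ZMod.val_add, ha.1] using ha.2
  · intro i _
    simp
  · intro a ha
    simp only [coe_filter, mem_range, Set.mem_ofPred_eq] at ha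
    simp [hval ha.1]

lemma card_windows_le_three (hn : 6 ≤ n) {x y : ZMod n} (hxy : x ≠ y) :
    #{i | s(x, y) ∈ (window n i).sym2} ≤ 3 := by
  rw [card_windows_eq (by omega)]
  exact (card_filter_range_four_add_mod_le hn (val_sub_pos hxy) (ZMod.val_lt _)).1

lemma cycleZ_adj_of_three_le_card_windows (hn : 6 ≤ n) {x y : ZMod n} (hxy : x ≠ y)
    (h : 3 ≤ #{i | s(x, y) ∈ (window n i).sym2}) : (cycleZ n).Adj x y := by
  rw [card_windows_eq (by omega)] at h
  have hd := ZMod.natCast_zmod_val (y - x)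
  refine ⟨hxy, ?_⟩
  by_contra! hne
  have h1 : (y - x).val ≠ 1 := fun h1 => hne.1 (by simp [h1] at hd; linear_combination -hd)
  have h2 : (y - x).val + 1 ≠ n := fun h2 => hne.2 <| by
    have : (((y - x).val + 1 : ℕ) : ZMod n) = 0 := by rw [h2, ZMod.natCast_self]
    push_cast [hd] at this
    linear_combination -this
  have := (card_filter_range_four_add_mod_le hn (val_sub_pos hxy) (ZMod.val_lt _)).2 h1 h2
  omega

lemma unique_edge_mem_window_and_cycleZ_adj (hn : 6 ≤ n) {F : SimpleGraph (ZMod n)}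
    (hF : TriviallyPerfect (symmDiff (cycleZ n) F)) (hcard : 3 * F.edgeSet.ncard ≤ n) :
    (∀ i, ∃! e, e ∈ F.edgeSet ∧ e ∈ (window n i).sym2) ∧
      ∀ ⦃x y⦄, F.Adj x y → (cycleZ n).Adj x y := by
  classical
  let r (i : ZMod n) (e : Sym2 (ZMod n)) : Prop := e ∈ (window n i).sym2
  have hdouble :=
    sum_card_bipartiteAbove_eq_sum_card_bipartiteBelow (s := univ) (t := F.edgeFinset) r
  have hlow (i) (_ : i ∈ univ) : 1 ≤ #(F.edgeFinset.bipartiteAbove r i) := by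
    obtain ⟨e, he, hei⟩ := exists_edge_mem_window (by omega) hF i
    exact card_pos.2 ⟨e, mem_filter.2 ⟨by simpa using he, hei⟩⟩
  have hup : ∀ e ∈ F.edgeFinset, #(univ.bipartiteBelow r e) ≤ 3 := by
    intro e he
    induction e using Sym2.ind with
    | h x y => exact card_windows_le_three hn (F.ne_of_adj (by simpa using he))
  have hsum : ∑ _e ∈ F.edgeFinset, 3 ≤ ∑ _i : ZMod n, 1 := by
    simp [ZMod.card, ← Set.ncard_coe_finset, mul_comm, hcard]
  have hbelow : ∑ e ∈ F.edgeFinset, #(univ.bipartiteBelow r e) = ∑ _e ∈ F.edgeFinset, 3 :=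
    le_antisymm (sum_le_sum hup) (hsum.trans ((sum_le_sum hlow).trans hdouble.le))
  have habove : ∑ _i : ZMod n, 1 = ∑ i, #(F.edgeFinset.bipartiteAbove r i) :=
    le_antisymm (sum_le_sum hlow) (hdouble.trans_le ((sum_le_sum hup).trans hsum))
  refine ⟨fun i => ?_, fun x y hxy => ?_⟩
  · obtain ⟨e, he⟩ := card_eq_one.1 ((sum_eq_sum_iff_of_le hlow).1 habove i (mem_univ i)).symm
    have hmem (e') : e' ∈ F.edgeSet ∧ e' ∈ (window n i).sym2 ↔ e' = e := by
      rw [← mem_singleton, ← he]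
      simp [bipartiteAbove, r]
    exact ⟨e, (hmem e).2 rfl, fun e' he' => (hmem e').1 he'⟩
  · have hxyE : s(x, y) ∈ F.edgeFinset := by simpa using hxy
    exact cycleZ_adj_of_three_le_card_windows hn hxy.ne
      ((sum_eq_sum_iff_of_le hup).1 hbelow _ hxyE).ge

lemma existsUnique_adj_add (hn : 5 ≤ n) {F : SimpleGraph (ZMod n)}
    (hU : ∀ i, ∃! e, e ∈ F.edgeSet ∧ e ∈ (window n i).sym2)
    (hC : ∀ ⦃x y⦄, F.Adj x y → (cycleZ n).Adj x y) (i : ZMod n) :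
    ∃! j : ℕ, j < 3 ∧ F.Adj (i + j) (i + j + 1) := by
  obtain ⟨e, ⟨he, hei⟩, huniq⟩ := hU i
  obtain ⟨m, rfl⟩ : ∃ m, e = s(m, m + 1) := by
    induction e using Sym2.ind with
    | h x y => exact exists_eq_mk_add_one_of_adj (hC he)
  obtain ⟨j, hj, rfl⟩ := (mk_add_one_mem_window_sym2 hn).1 hei
  refine ⟨j, ⟨hj, he⟩, fun j' ⟨hj', hFj'⟩ => ?_⟩
  have := huniq _ ⟨hFj', (mk_add_one_mem_window_sym2 hn).2 ⟨j', hj', rfl⟩⟩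
  exact (add_natCast_inj i (by omega) (by omega)).1 (mk_add_one_injective (by omega) this)

lemma eq_fromEdgeSet_of_adj_add_one_iff {p r : ℕ} (hp : 0 < p) (hr : r < 3)
    {F : SimpleGraph (ZMod (3 * p))} (hC : ∀ ⦃x y⦄, F.Adj x y → (cycleZ (3 * p)).Adj x y)
    (hP : ∀ k, F.Adj k (k + 1) ↔ k.val % 3 = r) :
    F = SimpleGraph.fromEdgeSet
      {e : Sym2 (ZMod (3 * p)) | ∃ i : ℕ, i < p ∧
        e = s(((3 * i + r : ℕ) : ZMod (3 * p)), ((3 * i + r + 1 : ℕ) : ZMod (3 * p)))} := by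
  have : NeZero (3 * p) := ⟨by omega⟩
  ext u v
  simp only [SimpleGraph.fromEdgeSet_adj, Set.mem_ofPred_eq]
  constructor
  · intro huv
    obtain ⟨m, hm⟩ := exists_eq_mk_add_one_of_adj (hC huv)
    have hmr : m.val % 3 = r := (hP m).1 (by rwa [← SimpleGraph.mem_edgeSet, ← hm])
    have hm_lt := ZMod.val_lt m
    refine ⟨⟨m.val / 3, by omega, ?_⟩, huv.ne⟩
    rw [hm, show 3 * (m.val / 3) + r = m.val by omega, Nat.cast_add_one, ZMod.natCast_zmod_val]
  · rintro ⟨⟨i, hi, huv⟩, -⟩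
    have hval : ((3 * i + r : ℕ) : ZMod (3 * p)).val = 3 * i + r :=
      ZMod.val_natCast_of_lt (by omega)
    rw [← SimpleGraph.mem_edgeSet, huv, Nat.cast_add_one, SimpleGraph.mem_edgeSet, hP, hval]
    omega

end CycleEditing

/-- An editing set of size exactly `p` for the cycle on `3p`
vertices (`p > 1`) consists of deletions of every third edge of the cycle:
the edges `v_{3i+r} v_{3i+r+1}` for `0 ≤ i < p`, for some fixed offset
`r ∈ {0, 1, 2}`. -/
theorem cycle_editing_tight (p : ℕ) (hp : 1 < p)
    (F : SimpleGraph (ZMod (3 * p)))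
    (hTP : TriviallyPerfect (symmDiff (cycleZ (3 * p)) F))
    (hcard : F.edgeSet.ncard = p) :
    ∃ r : ℕ, r < 3 ∧
      F = SimpleGraph.fromEdgeSet
        {e : Sym2 (ZMod (3 * p)) | ∃ i : ℕ, i < p ∧
          e = s(((3 * i + r : ℕ) : ZMod (3 * p)), ((3 * i + r + 1 : ℕ) : ZMod (3 * p)))} := by
  have : NeZero (3 * p) := ⟨by omega⟩
  obtain ⟨hU, hC⟩ :=
    CycleEditing.unique_edge_mem_window_and_cycleZ_adj (by omega) hTP (by rw [hcard])
  obtain ⟨r, hr, hP⟩ :=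
    CycleEditing.exists_forall_iff_val_mod_three (P := fun k => F.Adj k (k + 1)) (by omega)
      (CycleEditing.existsUnique_adj_add (by omega) hU hC)
  exact ⟨r, hr, CycleEditing.eq_fromEdgeSet_of_adj_add_one_iff (by omega) hr hC hP⟩
end

section
/- Let H be the subdivided claw: the star K_{1,3} with each edge subdivided once (7 vertices: a center v, three middle vertices a₁, b₁, c₁ adjacent to v, and three leaves a₂, b₂, c₂ with aᵢ₂ adjacent only to aᵢ₁, etc.). If F is an editing set for H (H △ F is trivially perfect), then |F| ≥ 2. Moreover, if |F| = 2 then F consists of deletions of two of the three edges incident to the center v. -/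
/-- The subdivided claw: center `0`, middle vertices `1, 2, 3`, leaves
`4, 5, 6` (leaf `i + 3` attached to middle vertex `i`). -/
def subdividedClaw : SimpleGraph (Fin 7) :=
  SimpleGraph.fromEdgeSet {s(0, 1), s(0, 2), s(0, 3), s(1, 4), s(2, 5), s(3, 6)}

/-!
For distinct middle vertices `i, j`, the vertices `i + 3, i, 0, j` induce a `P₄`. An edit
containing no pair inside such a set leaves that `P₄` induced, so an editing set has a pair inside
each of these six sets. Their common intersection is `{0}`, so one pair is not enough. Two pairs
suffice only if both are center edges, or they are a center edge `0i` and the edge `jk` between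
the other two middle vertices; that last edit turns the induced `2K₂` on `j + 3, j, k, k + 3`
into an induced `P₄`.
-/

open SimpleGraph

section Editing

variable {V : Type*} {G F : SimpleGraph V}

lemma symmDiff_adj_iff_of_not_adj {x y : V} (h : ¬F.Adj x y) :
    (symmDiff G F).Adj x y ↔ G.Adj x y := by
  simp [symmDiff_def, h]

lemma IsInducedP4.symmDiff_of_disjoint {a b c d : V} (hP : IsInducedP4 G a b c d)
    (hF : Disjoint F.edgeSet ({a, b, c, d} : Set V).sym2) :
    IsInducedP4 (symmDiff G F) a b c d := by
  have hadj : ∀ x ∈ ({a, b, c, d} : Set V), ∀ y ∈ ({a, b, c, d} : Set V),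
      (symmDiff G F).Adj x y ↔ G.Adj x y := fun x hx y hy =>
    symmDiff_adj_iff_of_not_adj fun hxy =>
      hF.notMem_of_mem_left (F.mem_edgeSet.mpr hxy) (Set.mk_mem_sym2_iff.mpr ⟨hx, hy⟩)
  unfold IsInducedP4 at hP ⊢
  simp only [hadj, Set.mem_insert_iff, Set.mem_singleton_iff, true_or, or_true]
  exact hP

lemma TriviallyPerfect.exists_edge_mem_sym2 (hTP : TriviallyPerfect (symmDiff G F))
    {a b c d : V} (hP : IsInducedP4 G a b c d) :
    ∃ e ∈ F.edgeSet, e ∈ ({a, b, c, d} : Set V).sym2 :=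
  Set.not_disjoint_iff.mp fun h => (hTP a b c d).1 (hP.symmDiff_of_disjoint h)

end Editing

set_option synthInstance.maxSize 1000 in
lemma subdividedClaw_isInducedP4 (i j : Fin 7) (hi : i ∈ ({1, 2, 3} : Set (Fin 7)))
    (hj : j ∈ ({1, 2, 3} : Set (Fin 7))) (hij : i ≠ j) :
    IsInducedP4 subdividedClaw (i + 3) i 0 j := by
  revert i j
  unfold IsInducedP4 subdividedClaw
  decide

set_option synthInstance.maxSize 1000 in
lemma subdividedClaw_hitting_edge_pair {e₁ e₂ : Sym2 (Fin 7)} (h₁ : ¬e₁.IsDiag) (h₂ : ¬e₂.IsDiag)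
    (hhit : ∀ i j : Fin 7, i ∈ ({1, 2, 3} : Set (Fin 7)) → j ∈ ({1, 2, 3} : Set (Fin 7)) → i ≠ j →
      ∃ e ∈ ({e₁, e₂} : Set (Sym2 (Fin 7))), e ∈ ({i + 3, i, 0, j} : Set (Fin 7)).sym2) :
    e₁ ≠ e₂ ∧
      (e₁ ∈ ({s(0, 1), s(0, 2), s(0, 3)} : Set (Sym2 (Fin 7))) ∧
          e₂ ∈ ({s(0, 1), s(0, 2), s(0, 3)} : Set (Sym2 (Fin 7))) ∨
        ∃ i j k : Fin 7, ({i, j, k} : Finset (Fin 7)) = {1, 2, 3} ∧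
          ({e₁, e₂} : Finset (Sym2 (Fin 7))) = {s(0, i), s(j, k)}) := by
  induction e₁ using Sym2.ind with | _ x₁ y₁ => ?_
  induction e₂ using Sym2.ind with | _ x₂ y₂ => ?_
  simp only [Set.mem_insert_iff, Set.mem_singleton_iff, exists_eq_or_imp, exists_eq_left,
    Set.mk_mem_sym2_iff] at hhit
  revert x₁ y₁ x₂ y₂
  decide

set_option synthInstance.maxSize 1000 in
lemma subdividedClaw_symmDiff_isInducedP4 (i j k : Fin 7)
    (hijk : ({i, j, k} : Finset (Fin 7)) = {1, 2, 3}) :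
    IsInducedP4 (symmDiff subdividedClaw (fromEdgeSet {s(0, i), s(j, k)}))
      (j + 3) j k (k + 3) := by
  revert i j k
  unfold IsInducedP4 subdividedClaw
  simp only [symmDiff_def, sup_adj, sdiff_adj]
  decide

/-- Any editing set of the subdivided claw has size at least 2;
if it has size exactly 2, it consists of deletions of two of the three edges
incident to the center. -/
theorem subdividedClaw_editing (F : SimpleGraph (Fin 7))
    (hTP : TriviallyPerfect (symmDiff subdividedClaw F)) :
    2 ≤ F.edgeSet.ncard ∧
      (F.edgeSet.ncard = 2 →
        F.edgeSet ⊆ {s(0, 1), s(0, 2), s(0, 3)}) := by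
  have hhit := fun i j hi hj hij =>
    hTP.exists_edge_mem_sym2 (subdividedClaw_isInducedP4 i j hi hj hij)
  refine ⟨?_, fun h2 => ?_⟩
  · by_contra! hlt
    obtain ⟨e, he, -⟩ := hhit 1 2 (by simp) (by simp) (by decide)
    have hE : F.edgeSet = {e, e} := by
      rw [Set.pair_eq_singleton,
        (Set.ncard_le_one_iff_subsingleton.mp (by omega)).eq_singleton_of_mem he]
    have hdiag := F.not_isDiag_of_mem_edgeSet he
    rw [hE] at hhit
    exact (subdividedClaw_hitting_edge_pair hdiag hdiag hhit).1 rfl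
  · obtain ⟨e₁, e₂, -, hE⟩ := Set.ncard_eq_two.mp h2
    have h₁ : ¬e₁.IsDiag := F.not_isDiag_of_mem_edgeSet (by simp [hE])
    have h₂ : ¬e₂.IsDiag := F.not_isDiag_of_mem_edgeSet (by simp [hE])
    rw [hE] at hhit ⊢
    rcases (subdividedClaw_hitting_edge_pair h₁ h₂ hhit).2 with ⟨hc₁, hc₂⟩ | ⟨i, j, k, hijk, hbad⟩
    · exact Set.insert_subset hc₁ (Set.singleton_subset_iff.mpr hc₂)
    · rw [← fromEdgeSet_edgeSet F, hE, ← Finset.coe_pair, hbad, Finset.coe_pair] at hTP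
      exact ((hTP _ _ _ _).1 (subdividedClaw_symmDiff_isInducedP4 i j k hijk)).elim
end

section
/- Let G be a graph, X ⊆ V(G), and suppose no set W of four vertices with |W ∩ X| ≤ 1 induces a P₄ or C₄ in G. Let u, v, w ∈ V(G) \ X with uv, uw ∈ E(G) and vw ∉ E(G). Then N(v) ∩ X ⊆ N(u) ∩ X. -/
/- If `x ∈ N(v) \ N(u)`, then `x v u w` is a path whose chords `xu` and `vw` are missing, so it
induces a `P₄` or (when `xw` is an edge) a `C₄`; it meets `X` only in `x`. -/

theorem Set.ncard_insert_inter_le_one {α : Type*} {X : Set α} (a : α) {s : Set α}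
    (hs : Disjoint s X) : ((insert a s) ∩ X).ncard ≤ 1 := by
  have hsub : insert a s ∩ X ⊆ {a} := by
    rintro y ⟨rfl | hy, hyX⟩
    · rfl
    · exact absurd hyX (hs.notMem_of_mem_left hy)
  simpa using Set.ncard_le_ncard hsub

theorem isInducedP4_or_isInducedC4 {V : Type*} {G : SimpleGraph V} {a b c d : V}
    (hab : G.Adj a b) (hbc : G.Adj b c) (hcd : G.Adj c d)
    (hac : ¬G.Adj a c) (hbd : ¬G.Adj b d) (hac' : a ≠ c) (hbd' : b ≠ d) :
    IsInducedP4 G a b c d ∨ IsInducedC4 G a b c d := by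
  have had : a ≠ d := by rintro rfl; exact hac hcd.symm
  by_cases hda : G.Adj d a
  · exact .inr ⟨hab, hbc, hcd, hda, hac, hbd, hab.ne, hac', had, hbc.ne, hbd', hcd.ne⟩
  · exact .inl ⟨hab, hbc, hcd, hac, fun h => hda h.symm, hbd, hab.ne, hac', had, hbc.ne, hbd',
      hcd.ne⟩

/-- If no 4-vertex set meeting `X` in at most one vertex induces
a `P₄` or a `C₄`, and `u, v, w ∉ X` with `uv, uw ∈ E`, `vw ∉ E`, then
`N(v) ∩ X ⊆ N(u) ∩ X`. -/
theorem xNeighborhood_subset_of_prec {V : Type*} (G : SimpleGraph V) (X : Set V)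
    (hX : ∀ a b c d : V, (({a, b, c, d} : Set V) ∩ X).ncard ≤ 1 →
      ¬IsInducedP4 G a b c d ∧ ¬IsInducedC4 G a b c d)
    (u v w : V) (hu : u ∉ X) (hv : v ∉ X) (hw : w ∉ X)
    (huvw : u ≠ v ∧ u ≠ w ∧ v ≠ w)
    (huv : G.Adj u v) (huw : G.Adj u w) (hvw : ¬G.Adj v w) :
    G.neighborSet v ∩ X ⊆ G.neighborSet u ∩ X := by
  rintro x ⟨hvx, hxX⟩
  refine ⟨by_contra fun hux => ?_, hxX⟩
  have hxu : x ≠ u := by rintro rfl; exact hu hxX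
  have hdisj : Disjoint ({v, u, w} : Set V) X := by
    simp only [Set.disjoint_insert_left, Set.disjoint_singleton_left]
    exact ⟨hv, hu, hw⟩
  obtain ⟨hP4, hC4⟩ := hX x v u w (Set.ncard_insert_inter_le_one x hdisj)
  exact (isInducedP4_or_isInducedC4 (G.adj_symm hvx) huv.symm huw (fun h => hux h.symm) hvw hxu
    huvw.2.2).elim hP4 hC4
end

section
/- Let T be a rooted tree, M ⊆ V(T), and let M' be the LCA-closure of M (the smallest superset of M closed under taking least common ancestors of pairs of its elements). Then |M'| ≤ 2|M|, and every connected component C of T − M' satisfies |N_T(C)| ≤ 2. -/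
/-!
Since the ancestors of a vertex form a chain, any two vertices have a meet (their LCA), so `T` is a
meet-semilattice and `M'` is the inf-closure of `M`. Adding a vertex `a` to an inf-closed set `S`
only creates, besides `a`, the meets `a ⊓ m` with `m ∈ S`; in a tree each of these either lies in
`S` or equals the largest of them, so every vertex of `M` costs at most two vertices of `M'`.

A walk in the Hasse diagram can enter the subtree above `z` only through `z`, coming from the parent
of `z`. Hence a component `C` of `T − M'` has at most one parent in `M'`. It also has at most one
child in `M'`: if `mᵢ ∈ M'` is a child of `cᵢ ∈ C`, then either `m₁ ⊓ m₂ ∈ M'` equals `c₁ ⊓ c₂`, which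
lies on every walk from `c₁` to `c₂`, or `m₁` and `m₂` are comparable, say `m₁ < m₂`, and then `m₁`
lies between `c₁` and `c₂`, hence on every such walk.
-/

open SimpleGraph

section Chain

variable {α : Type*} [PartialOrder α]

lemma Set.Finite.exists_isGreatest_of_isChain {s : Set α} (hs : s.Finite) (hne : s.Nonempty)
    (hc : IsChain (· ≤ ·) s) : ∃ a, IsGreatest s a := by
  obtain ⟨a, ha⟩ := hs.exists_maximal hne
  exact ⟨a, ha.prop, fun b hb => (hc.total hb ha.prop).elim id (ha.le_of_ge hb)⟩

lemma exists_isGLB_pair [OrderBot α] [Finite α] (htree : ∀ v : α, IsChain (· ≤ ·) (Set.Iic v))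
    (a b : α) : ∃ c, IsGLB {a, b} c :=
  (Set.toFinite _).exists_isGreatest_of_isChain ⟨⊥, fun _ _ => bot_le⟩
    ((htree a).mono fun _ hx => hx (Set.mem_insert a {b}))

noncomputable abbrev semilatticeInfOfIsChainIic [OrderBot α] [Finite α]
    (htree : ∀ v : α, IsChain (· ≤ ·) (Set.Iic v)) : SemilatticeInf α where
  inf a b := (exists_isGLB_pair htree a b).choose
  inf_le_left a b := (exists_isGLB_pair htree a b).choose_spec.1 (Set.mem_insert a {b})
  inf_le_right a b := (exists_isGLB_pair htree a b).choose_spec.1 (Set.mem_insert_of_mem a rfl)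
  le_inf _ b c hb hc :=
    (exists_isGLB_pair htree b c).choose_spec.2 (by rintro _ (rfl | rfl) <;> assumption)

variable {x y z : α}

lemma le_total_of_le (htree : ∀ v : α, IsChain (· ≤ ·) (Set.Iic v)) (hx : x ≤ z) (hy : y ≤ z) :
    x ≤ y ∨ y ≤ x :=
  (htree z).total hx hy

lemma CovBy.le_or_eq_of_le (htree : ∀ v : α, IsChain (· ≤ ·) (Set.Iic v)) (h : x ⋖ y)
    (hz : z ≤ y) : z ≤ x ∨ z = y := by
  rcases le_total_of_le htree hz h.le with hzx | hxz
  · exact .inl hzx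
  · exact (h.eq_or_eq hxz hz).imp le_of_eq id

lemma CovBy.eq_of_covBy (htree : ∀ v : α, IsChain (· ≤ ·) (Set.Iic v)) (hx : x ⋖ z)
    (hy : y ⋖ z) : x = y :=
  le_antisymm ((hy.le_or_eq_of_le htree hx.le).resolve_right hx.ne)
    ((hx.le_or_eq_of_le htree hy.le).resolve_right hy.ne)

end Chain

section InfClosure

variable {α : Type*} [SemilatticeInf α]

lemma infClosed_iff_forall_isGLB_pair_mem {s : Set α} :
    InfClosed s ↔ ∀ a ∈ s, ∀ b ∈ s, ∀ c, IsGLB {a, b} c → c ∈ s :=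
  ⟨fun hs _ ha _ hb _ hc => hc.unique isGLB_pair ▸ hs ha hb,
    fun hs a ha b hb => hs a ha b hb _ isGLB_pair⟩

lemma InfClosed.insert_union_image_inf {s : Set α} (hs : InfClosed s) (a : α) :
    InfClosed (insert a (s ∪ (a ⊓ ·) '' s)) := by
  have key : ∀ m ∈ s, a ⊓ m ∈ insert a (s ∪ (a ⊓ ·) '' s) := fun m hm =>
    Set.mem_insert_of_mem _ (.inr ⟨m, hm, rfl⟩)
  rintro x (rfl | hx | ⟨m, hm, rfl⟩) y (rfl | hy | ⟨n, hn, rfl⟩) <;> beta_reduce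
  · rw [inf_idem]; exact Set.mem_insert _ _
  · exact key y hy
  · rw [← inf_assoc, inf_idem]; exact key n hn
  · rw [inf_comm]; exact key x hx
  · exact Set.mem_insert_of_mem _ (.inl (hs hx hy))
  · rw [inf_left_comm]; exact key _ (hs hx hn)
  · rw [inf_right_comm, inf_idem]; exact key m hm
  · rw [inf_assoc]; exact key _ (hs hm hy)
  · rw [← inf_inf_distrib_left]; exact key _ (hs hm hn)

lemma infClosure_insert_subset (a : α) (s : Set α) :
    infClosure (insert a s) ⊆ insert a (infClosure s ∪ (a ⊓ ·) '' infClosure s) :=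
  infClosure_min (Set.insert_subset_insert (subset_infClosure.trans Set.subset_union_left))
    (infClosed_infClosure.insert_union_image_inf a)

variable {s : Set α}

/-- The witness is the largest of the meets `a ⊓ m`, `m ∈ s`. -/
lemma exists_image_inf_subset_insert (htree : ∀ v : α, IsChain (· ≤ ·) (Set.Iic v))
    (hs : InfClosed s) (hfin : s.Finite) (a : α) : ∃ y, (a ⊓ ·) '' s ⊆ insert y s := by
  rcases s.eq_empty_or_nonempty with rfl | hne
  · exact ⟨a, by simp⟩
  obtain ⟨_, ⟨m₀, hm₀, rfl⟩, hmax⟩ := (hfin.image (a ⊓ ·)).exists_isGreatest_of_isChain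
    (hne.image _) ((htree a).mono (Set.image_subset_iff.2 fun _ _ => inf_le_left))
  refine ⟨a ⊓ m₀, ?_⟩
  rintro _ ⟨m, hm, rfl⟩
  dsimp only
  have hle : a ⊓ m ≤ a ⊓ m₀ := hmax ⟨m, hm, rfl⟩
  rcases le_total_of_le htree (inf_le_left : m₀ ⊓ m ≤ m₀) (inf_le_right : a ⊓ m₀ ≤ m₀) with
    h | h
  · have heq : m₀ ⊓ m = a ⊓ m := le_antisymm (le_inf (h.trans inf_le_left) inf_le_right)
      (le_inf (hle.trans inf_le_right) inf_le_right)
    exact .inr (heq ▸ hs hm₀ hm)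
  · exact .inl (le_antisymm hle (le_inf inf_le_left (h.trans (inf_le_right : m₀ ⊓ m ≤ m))))

lemma ncard_infClosure_le (htree : ∀ v : α, IsChain (· ≤ ·) (Set.Iic v)) (hs : s.Finite) :
    (infClosure s).ncard ≤ 2 * s.ncard := by
  induction s, hs using Set.Finite.induction_on with
  | empty => simp
  | @insert a s ha hs ih =>
    obtain ⟨y, hy⟩ := exists_image_inf_subset_insert htree infClosed_infClosure hs.infClosure a
    calc (infClosure (insert a s)).ncard ≤ (insert a (insert y (infClosure s))).ncard :=
          Set.ncard_le_ncard ((infClosure_insert_subset a s).trans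
            (Set.insert_subset_insert (Set.union_subset (Set.subset_insert _ _) hy)))
            ((hs.infClosure.insert y).insert a)
      _ ≤ (infClosure s).ncard + 2 :=
          (Set.ncard_insert_le _ _).trans (Nat.add_le_add_right (Set.ncard_insert_le _ _) 1)
      _ ≤ 2 * (insert a s).ncard := by rw [Set.ncard_insert_of_notMem ha hs]; omega

end InfClosure

section Hasse

variable {α : Type*} [PartialOrder α] {s : Set α} {u v z : α}

lemma exists_covBy_mem_support_of_not_le_of_le (htree : ∀ v : α, IsChain (· ≤ ·) (Set.Iic v))
    (p : (hasse α).Walk u v) (hzu : ¬ z ≤ u) (hzv : z ≤ v) :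
    z ∈ p.support ∧ ∃ w ∈ p.support, w ⋖ z := by
  obtain ⟨d, hd, hfst, hsnd⟩ := p.exists_boundary_dart {x | ¬ z ≤ x} hzu (not_not.2 hzv)
  replace hsnd : z ≤ d.snd := not_not.1 hsnd
  rcases hasse_adj.1 d.adj with hcov | hcov
  · obtain rfl : z = d.snd := (hcov.le_or_eq_of_le htree hsnd).resolve_left hfst
    exact ⟨p.dart_snd_mem_support_of_mem_darts hd, d.fst, p.dart_fst_mem_support_of_mem_darts hd,
      hcov⟩
  · exact absurd (hsnd.trans hcov.le) hfst

lemma le_of_covBy_of_walk (htree : ∀ v : α, IsChain (· ≤ ·) (Set.Iic v)) {m c c' : α}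
    (hm : m ∈ s) (hmc : m ⋖ c) (p : (hasse α).Walk c' c) (hp : ∀ x ∈ p.support, x ∉ s) :
    c ≤ c' := by
  by_contra hcc'
  obtain ⟨-, w, hw, hwc⟩ := exists_covBy_mem_support_of_not_le_of_le htree p hcc' le_rfl
  exact hp w hw (hwc.eq_of_covBy htree hmc ▸ hm)

lemma eq_of_covBy_of_walk (htree : ∀ v : α, IsChain (· ≤ ·) (Set.Iic v)) {m₁ m₂ c₁ c₂ : α}
    (hm₁ : m₁ ∈ s) (hm₂ : m₂ ∈ s) (h₁ : m₁ ⋖ c₁) (h₂ : m₂ ⋖ c₂) (p : (hasse α).Walk c₁ c₂)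
    (hp : ∀ x ∈ p.support, x ∉ s) : m₁ = m₂ := by
  have hc : c₁ = c₂ := le_antisymm
    (le_of_covBy_of_walk htree hm₁ h₁ p.reverse fun x hx => hp x (by simpa using hx))
    (le_of_covBy_of_walk htree hm₂ h₂ p hp)
  exact h₁.eq_of_covBy htree (hc ▸ h₂)

end Hasse

lemma SimpleGraph.Reachable.exists_walk_of_induce {V : Type*} {G : SimpleGraph V} {s : Set V}
    {u v : s} (h : (G.induce s).Reachable u v) : ∃ p : G.Walk u v, ∀ x ∈ p.support, x ∈ s := by
  obtain ⟨p⟩ := h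
  refine ⟨p.map (Embedding.induce s).toHom, fun x hx => ?_⟩
  obtain ⟨y, -, rfl⟩ := List.mem_map.1 (Walk.support_map _ p ▸ hx)
  exact y.2

section HasseInf

variable {α : Type*} [SemilatticeInf α] {s : Set α} {x y : α}

lemma CovBy.inf_eq_or_le (htree : ∀ v : α, IsChain (· ≤ ·) (Set.Iic v)) (h : x ⋖ y) (v : α) :
    x ⊓ v = y ⊓ v ∨ x ≤ v ∧ y ≤ v := by
  rcases h.le_or_eq_of_le htree (inf_le_left : y ⊓ v ≤ y) with hle | heq
  · exact .inl (le_antisymm (inf_le_inf_right v h.le) (le_inf hle inf_le_right))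
  · have hy : y ≤ v := inf_eq_left.1 heq
    exact .inr ⟨h.le.trans hy, hy⟩

lemma inf_mem_support (htree : ∀ v : α, IsChain (· ≤ ·) (Set.Iic v)) :
    ∀ {u v : α} (p : (hasse α).Walk u v), u ⊓ v ∈ p.support
  | u, _, .nil => by simp
  | u, v, .cons (v := b) hadj q => by
    have hcases : u ⊓ v = b ⊓ v ∨ u ≤ v := by
      rcases hasse_adj.1 hadj with h | h
      · exact (h.inf_eq_or_le htree v).imp_right And.left
      · exact ((h.inf_eq_or_le htree v).imp Eq.symm And.right)
    rw [Walk.support_cons, List.mem_cons]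
    rcases hcases with heq | hle
    · exact .inr (heq ▸ inf_mem_support htree q)
    · exact .inl (inf_eq_left.2 hle)

lemma eq_of_le_of_covBy_of_walk (htree : ∀ v : α, IsChain (· ≤ ·) (Set.Iic v)) {m₁ m₂ c₁ c₂ : α}
    (hm₁ : m₁ ∈ s) (h₁ : c₁ ⋖ m₁) (h₂ : c₂ ⋖ m₂) (hle : m₁ ≤ m₂) (p : (hasse α).Walk c₁ c₂)
    (hp : ∀ x ∈ p.support, x ∉ s) : m₁ = m₂ := by
  refine (h₂.le_or_eq_of_le htree hle).resolve_left fun hmc => hp m₁ ?_ hm₁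
  exact (exists_covBy_mem_support_of_not_le_of_le htree p h₁.lt.not_ge hmc).1

lemma InfClosed.eq_of_covBy_of_walk (htree : ∀ v : α, IsChain (· ≤ ·) (Set.Iic v))
    (hs : InfClosed s) {m₁ m₂ c₁ c₂ : α} (hm₁ : m₁ ∈ s) (hm₂ : m₂ ∈ s) (h₁ : c₁ ⋖ m₁)
    (h₂ : c₂ ⋖ m₂) (p : (hasse α).Walk c₁ c₂) (hp : ∀ x ∈ p.support, x ∉ s) : m₁ = m₂ := by
  rcases h₁.le_or_eq_of_le htree (inf_le_left : m₁ ⊓ m₂ ≤ m₁) with hc₁ | hm₁₂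
  · rcases h₂.le_or_eq_of_le htree (inf_le_right : m₁ ⊓ m₂ ≤ m₂) with hc₂ | hm₂₁
    · -- the meet `c₁ ⊓ c₂`, which lies on `p`, would be `m₁ ⊓ m₂ ∈ s`
      have heq : c₁ ⊓ c₂ = m₁ ⊓ m₂ := le_antisymm (inf_le_inf h₁.le h₂.le) (le_inf hc₁ hc₂)
      exact absurd (heq ▸ hs hm₁ hm₂) (hp _ (inf_mem_support htree p))
    · exact (eq_of_le_of_covBy_of_walk htree hm₂ h₂ h₁ (inf_eq_right.1 hm₂₁) p.reverse
        fun x hx => hp x (by simpa using hx)).symm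
  · exact eq_of_le_of_covBy_of_walk htree hm₁ h₁ h₂ (inf_eq_left.1 hm₁₂) p hp

theorem ncard_adj_connectedComponent_le_two
    (htree : ∀ v : α, IsChain (· ≤ ·) (Set.Iic v)) (hs : InfClosed s)
    (C : ((hasse α).induce sᶜ).ConnectedComponent) :
    {m ∈ s | ∃ c : (sᶜ : Set α),
      ((hasse α).induce sᶜ).connectedComponentMk c = C ∧ (hasse α).Adj m c}.ncard ≤ 2 := by
  have hwalk : ∀ c₁ c₂ : (sᶜ : Set α), ((hasse α).induce sᶜ).connectedComponentMk c₁ = C →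
      ((hasse α).induce sᶜ).connectedComponentMk c₂ = C →
      ∃ p : (hasse α).Walk c₁ c₂, ∀ x ∈ p.support, x ∉ s := fun c₁ c₂ h₁ h₂ =>
    (ConnectedComponent.exact (h₁.trans h₂.symm)).exists_walk_of_induce
  set parents := {m ∈ s | ∃ c : (sᶜ : Set α),
    ((hasse α).induce sᶜ).connectedComponentMk c = C ∧ m ⋖ c}
  set children := {m ∈ s | ∃ c : (sᶜ : Set α),
    ((hasse α).induce sᶜ).connectedComponentMk c = C ∧ (c : α) ⋖ m}
  have hparents : parents.Subsingleton := by
    rintro m₁ ⟨hm₁, c₁, hC₁, h₁⟩ m₂ ⟨hm₂, c₂, hC₂, h₂⟩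
    obtain ⟨p, hp⟩ := hwalk c₁ c₂ hC₁ hC₂
    exact eq_of_covBy_of_walk htree hm₁ hm₂ h₁ h₂ p hp
  have hchildren : children.Subsingleton := by
    rintro m₁ ⟨hm₁, c₁, hC₁, h₁⟩ m₂ ⟨hm₂, c₂, hC₂, h₂⟩
    obtain ⟨p, hp⟩ := hwalk c₁ c₂ hC₁ hC₂
    exact hs.eq_of_covBy_of_walk htree hm₁ hm₂ h₁ h₂ p hp
  have hsub : {m ∈ s | ∃ c : (sᶜ : Set α), ((hasse α).induce sᶜ).connectedComponentMk c = C ∧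
      (hasse α).Adj m c} ⊆ parents ∪ children := by
    rintro m ⟨hm, c, hC, hadj⟩
    exact (hasse_adj.1 hadj).imp (fun h => ⟨hm, c, hC, h⟩) fun h => ⟨hm, c, hC, h⟩
  calc _ ≤ (parents ∪ children).ncard :=
        Set.ncard_le_ncard hsub (hparents.finite.union hchildren.finite)
    _ ≤ parents.ncard + children.ncard := Set.ncard_union_le _ _
    _ ≤ 1 + 1 := add_le_add ((Set.ncard_le_one hparents.finite).2 fun _ h _ h' => hparents h h')
        ((Set.ncard_le_one hchildren.finite).2 fun _ h _ h' => hchildren h h')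

end HasseInf

theorem lca_closure_properties_general {V : Type*} [Fintype V] [PartialOrder V] [OrderBot V]
    (htree : ∀ v : V, IsChain (· ≤ ·) {u : V | u ≤ v})
    (M M' : Set V)
    (hclosed : ∀ a ∈ M', ∀ b ∈ M', ∀ c : V, IsGLB {a, b} c → c ∈ M')
    (hmin : ∀ S : Set V, M ⊆ S →
      (∀ a ∈ S, ∀ b ∈ S, ∀ c : V, IsGLB {a, b} c → c ∈ S) → M' ⊆ S)
    (G : SimpleGraph V) (hG : ∀ u v : V, G.Adj u v ↔ (u ⋖ v ∨ v ⋖ u)) :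
    M'.ncard ≤ 2 * M.ncard ∧
      ∀ C : (G.induce M'ᶜ).ConnectedComponent,
        {m ∈ M' | ∃ c : (M'ᶜ : Set V),
          (G.induce M'ᶜ).connectedComponentMk c = C ∧ G.Adj m c}.ncard ≤ 2 := by
  let _ : SemilatticeInf V := semilatticeInfOfIsChainIic htree
  obtain rfl : G = hasse V := by ext u v; exact hG u v
  have hM'_sub : M' ⊆ infClosure M :=
    hmin _ subset_infClosure (infClosed_iff_forall_isGLB_pair_mem.1 infClosed_infClosure)
  exact ⟨(Set.ncard_le_ncard hM'_sub (Set.toFinite _)).trans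
      (ncard_infClosure_le htree (Set.toFinite M)),
    ncard_adj_connectedComponent_le_two htree (infClosed_iff_forall_isGLB_pair_mem.2 hclosed)⟩

/-- For a rooted tree `T` (modelled as a finite partial order in
which the set of ancestors of every vertex is a chain, with the root as bottom
element), if `M'` is the LCA-closure of `M` (the smallest superset of `M`
closed under least common ancestors, i.e., greatest lower bounds, of pairs),
then `|M'| ≤ 2|M|` and every connected component `C` of `T − M'` has at most
two neighbors in `M'`, where the tree edges are the covering pairs of the
order. -/
theorem lca_closure_properties {V : Type*} [Fintype V] [PartialOrder V] [OrderBot V]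
    (htree : ∀ v : V, IsChain (· ≤ ·) {u : V | u ≤ v})
    (M M' : Set V)
    (hsub : M ⊆ M')
    (hclosed : ∀ a ∈ M', ∀ b ∈ M', ∀ c : V, IsGLB {a, b} c → c ∈ M')
    (hmin : ∀ S : Set V, M ⊆ S →
      (∀ a ∈ S, ∀ b ∈ S, ∀ c : V, IsGLB {a, b} c → c ∈ S) → M' ⊆ S)
    (G : SimpleGraph V) (hG : ∀ u v : V, G.Adj u v ↔ (u ⋖ v ∨ v ⋖ u)) :
    M'.ncard ≤ 2 * M.ncard ∧
      ∀ C : (G.induce M'ᶜ).ConnectedComponent,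
        {m ∈ M' | ∃ c : (M'ᶜ : Set V),
          (G.induce M'ᶜ).connectedComponentMk c = C ∧ G.Adj m c}.ncard ≤ 2 :=
  lca_closure_properties_general htree M M' hclosed hmin G hG
end

section
/- Let G be a graph, M a module of G with G[M] trivially perfect and containing an independent set of size at least 2k + 5, let I ⊆ M be an independent set of size 2k + 4, and let A = M \ I. If F is a minimum-size editing set for G − A with |F| ≤ k, then no vertex of I is incident to any pair of F. -/
open Finset in
lemma SimpleGraph.ncard_support_le_two_mul_ncard_edgeSet_s18 {W : Type*} [Fintype W]
    (F : SimpleGraph W) : F.support.ncard ≤ 2 * F.edgeSet.ncard := by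
  classical
  rw [Set.ncard_eq_toFinset_card', Set.ncard_eq_toFinset_card', ← edgeFinset,
    ← sum_degrees_support_eq_twice_card_edges]
  simpa using card_nsmul_le_sum F.support.toFinset (fun v => F.degree v) 1 fun v hv =>
    Nat.one_le_iff_ne_zero.mpr fun h =>
      (F.degree_eq_zero_iff_notMem_support v).mp h (Set.mem_toFinset.mp hv)

lemma SimpleGraph.symmDiff_adj_s18 {W : Type*} {H F : SimpleGraph W} {u v : W} :
    (symmDiff H F).Adj u v ↔ ¬(H.Adj u v ↔ F.Adj u v) := by
  simp only [symmDiff_def, sup_adj, sdiff_adj]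
  tauto

lemma SimpleGraph.adj_swap_iff {W : Type*} [DecidableEq W] {H : SimpleGraph W} {x z : W}
    (htwin : ∀ b, b ≠ x → b ≠ z → (H.Adj x b ↔ H.Adj z b)) (u v : W) :
    H.Adj (Equiv.swap x z u) (Equiv.swap x z v) ↔ H.Adj u v := by
  have hleft : ∀ u v, v ≠ x → v ≠ z → (H.Adj (Equiv.swap x z u) v ↔ H.Adj u v) := by
    intro u v hvx hvz
    rcases eq_or_ne u x with rfl | hux
    · simpa using (htwin v hvx hvz).symm
    rcases eq_or_ne u z with rfl | huz
    · simpa using htwin v hvx hvz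
    rw [Equiv.swap_apply_of_ne_of_ne hux huz]
  by_cases hv : v ≠ x ∧ v ≠ z
  · rw [Equiv.swap_apply_of_ne_of_ne hv.1 hv.2, hleft u v hv.1 hv.2]
  by_cases hu : u ≠ x ∧ u ≠ z
  · rw [Equiv.swap_apply_of_ne_of_ne hu.1 hu.2, H.adj_comm, hleft v u hu.1 hu.2, H.adj_comm]
  rw [not_and_or, not_ne_iff, not_ne_iff] at hu hv
  rcases hu with rfl | rfl <;> rcases hv with rfl | rfl <;> simp [H.adj_comm]

lemma IsModule.adj_iff_of_indep {V : Type*} {G : SimpleGraph V} {M I : Set V}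
    (hM : IsModule G M) (hIM : I ⊆ M) (hI : ∀ u ∈ I, ∀ v ∈ I, u ≠ v → ¬G.Adj u v)
    {x z b : V} (hx : x ∈ I) (hz : z ∈ I) (hb : b ∉ M \ I) (hbx : b ≠ x) (hbz : b ≠ z) :
    G.Adj x b ↔ G.Adj z b := by
  by_cases hbM : b ∈ M
  · have hbI : b ∈ I := by_contra fun hbI => hb ⟨hbM, hbI⟩
    exact iff_of_false (hI x hx b hbI hbx.symm) (hI z hz b hbI hbz.symm)
  rcases hM b hbM with hall | hnone
  · exact iff_of_true (hall x (hIM hx)).symm (hall z (hIM hz)).symm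
  · exact iff_of_false (fun h => hnone x (hIM hx) h.symm) (fun h => hnone z (hIM hz) h.symm)

section
variable {W W' : Type*} {H : SimpleGraph W} {H' : SimpleGraph W'} {f : W → W'} {a b c d : W}

lemma IsInducedP4.map (hf : f.Injective)
    (hadj : ∀ u ∈ ({a, b, c, d} : Set W), ∀ v ∈ ({a, b, c, d} : Set W),
      (H'.Adj (f u) (f v) ↔ H.Adj u v))
    (h : IsInducedP4 H a b c d) : IsInducedP4 H' (f a) (f b) (f c) (f d) := by
  simp only [Set.mem_insert_iff, Set.mem_singleton_iff, forall_eq_or_imp, forall_eq] at hadj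
  obtain ⟨⟨-, hab, hac, had⟩, ⟨-, -, hbc, hbd⟩, ⟨-, -, -, hcd⟩, -⟩ := hadj
  simpa only [IsInducedP4, hab, hac, had, hbc, hbd, hcd, hf.ne_iff] using h

lemma IsInducedC4.map (hf : f.Injective)
    (hadj : ∀ u ∈ ({a, b, c, d} : Set W), ∀ v ∈ ({a, b, c, d} : Set W),
      (H'.Adj (f u) (f v) ↔ H.Adj u v))
    (h : IsInducedC4 H a b c d) : IsInducedC4 H' (f a) (f b) (f c) (f d) := by
  simp only [Set.mem_insert_iff, Set.mem_singleton_iff, forall_eq_or_imp, forall_eq] at hadj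
  obtain ⟨⟨-, hab, hac, -⟩, ⟨-, -, hbc, hbd⟩, ⟨-, -, -, hcd⟩, ⟨hda, -, -, -⟩⟩ := hadj
  simpa only [IsInducedC4, hab, hac, hda, hbc, hbd, hcd, hf.ne_iff] using h

lemma TriviallyPerfect.of_forall_embed (hH' : TriviallyPerfect H')
    (hemb : ∀ a b c d : W, ∃ f : W → W', f.Injective ∧
      ∀ u ∈ ({a, b, c, d} : Set W), ∀ v ∈ ({a, b, c, d} : Set W),
        (H'.Adj (f u) (f v) ↔ H.Adj u v)) :
    TriviallyPerfect H := by
  intro a b c d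
  obtain ⟨f, hf, hadj⟩ := hemb a b c d
  exact ⟨fun h => (hH' _ _ _ _).1 (h.map hf hadj), fun h => (hH' _ _ _ _).2 (h.map hf hadj)⟩

end

section
variable {W : Type*} [DecidableEq W] {x : W} {U : Set W}

lemma TriviallyPerfect.of_adj_iff_of_ne_of_twins {H H' : SimpleGraph W}
    (hH : TriviallyPerfect H) (hagree : ∀ u v, u ≠ x → v ≠ x → (H.Adj u v ↔ H'.Adj u v))
    (hxU : x ∉ U) (hU : 4 ≤ U.ncard)
    (htwin : ∀ z ∈ U, ∀ b, b ≠ x → b ≠ z → (H'.Adj x b ↔ H'.Adj z b)) :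
    TriviallyPerfect H' := by
  refine hH.of_forall_embed fun a b c d => ?_
  set q : Set W := {a, b, c, d}
  -- `swap x z` for a twin `z ∉ q` moves `q` off `x`, where `H` and `H'` agree
  obtain ⟨z, hzq, hz⟩ : ∃ z ∉ q, ∀ b, b ≠ x → b ≠ z → (H'.Adj x b ↔ H'.Adj z b) := by
    by_cases hxq : x ∈ q
    · have hq : q.ncard ≤ 4 := by
        rw [show q = ↑({a, b, c, d} : Finset W) by simp [q], Set.ncard_coe_finset]
        exact Finset.card_le_four
      obtain ⟨z, hzU, hzq⟩ := Set.exists_mem_notMem_of_ncard_lt_ncard (s := q \ {x}) (t := U)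
        (by rw [Set.ncard_sdiff_singleton_of_mem hxq]; omega)
      exact ⟨z, fun h => hzq ⟨h, ne_of_mem_of_not_mem hzU hxU⟩, htwin z hzU⟩
    · exact ⟨x, hxq, fun _ _ _ => Iff.rfl⟩
  have hswap : ∀ w ∈ q, Equiv.swap x z w ≠ x := fun w hw h =>
    hzq (by rw [Equiv.swap_apply_eq_iff, Equiv.swap_apply_left] at h; rwa [← h])
  refine ⟨Equiv.swap x z, (Equiv.swap x z).injective, fun u hu v hv => ?_⟩
  rw [hagree _ _ (hswap u hu) (hswap v hv), H'.adj_swap_iff hz]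

lemma TriviallyPerfect.symmDiff_deleteIncidenceSet {H F : SimpleGraph W}
    (hHF : TriviallyPerfect (symmDiff H F)) (hxU : x ∉ U) (hU : 4 ≤ U.ncard)
    (hUF : Disjoint U F.support)
    (htwin : ∀ z ∈ U, ∀ b, b ≠ x → b ≠ z → (H.Adj x b ↔ H.Adj z b)) :
    TriviallyPerfect (symmDiff H (F.deleteIncidenceSet x)) := by
  refine hHF.of_adj_iff_of_ne_of_twins (fun u v hu hv => ?_) hxU hU fun z hz b hbx hbz => ?_
  · simp only [SimpleGraph.symmDiff_adj_s18, SimpleGraph.deleteIncidenceSet_adj]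
    tauto
  · have hzF : ¬F.Adj z b := fun h => Set.disjoint_left.mp hUF hz h.mem_support_left
    simp only [SimpleGraph.symmDiff_adj_s18, SimpleGraph.deleteIncidenceSet_adj, hzF,
      htwin z hz b hbx hbz]
    tauto

end

theorem module_reduction_clean_indep_general {V : Type*} [Fintype V]
    (G : SimpleGraph V) (k : ℕ) (M : Set V)
    (hM : IsModule G M)
    (I : Set V) (hIM : I ⊆ M)
    (hIindep : ∀ u ∈ I, ∀ v ∈ I, u ≠ v → ¬G.Adj u v)
    (hIcard : I.ncard = 2 * k + 4)
    (F : SimpleGraph ((M \ I)ᶜ : Set V))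
    (hFtp : TriviallyPerfect (symmDiff (G.induce ((M \ I)ᶜ : Set V)) F))
    (hFmin : ∀ F' : SimpleGraph ((M \ I)ᶜ : Set V),
      TriviallyPerfect (symmDiff (G.induce ((M \ I)ᶜ : Set V)) F') →
      F.edgeSet.ncard ≤ F'.edgeSet.ncard)
    (hFk : F.edgeSet.ncard ≤ k) :
    ∀ x : ((M \ I)ᶜ : Set V), (x : V) ∈ I → ∀ y, ¬F.Adj x y := by
  classical
  intro x hxI y hxy
  have hI : (Subtype.val ⁻¹' I : Set ((M \ I)ᶜ : Set V)).ncard = 2 * k + 4 := by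
    rw [Set.ncard_preimage_of_injective_subset_range Subtype.val_injective
      fun v hv => ⟨⟨v, fun h => h.2 hv⟩, rfl⟩, hIcard]
  have hU : 4 ≤ (Subtype.val ⁻¹' I \ F.support).ncard := by
    have := Set.le_ncard_sdiff F.support (Subtype.val ⁻¹' I)
    have := F.ncard_support_le_two_mul_ncard_edgeSet_s18
    omega
  have hdel := hFtp.symmDiff_deleteIncidenceSet (fun hx => hx.2 hxy.mem_support_left) hU
    Set.disjoint_sdiff_left fun z hz b hbx hbz =>
      hM.adj_iff_of_indep hIM hIindep hxI hz.1 b.2 (Subtype.val_injective.ne hbx)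
        (Subtype.val_injective.ne hbz)
  have hlt : (F.deleteIncidenceSet x).edgeSet.ncard < F.edgeSet.ncard :=
    Set.ncard_lt_ncard <| SimpleGraph.edgeSet_ssubset_edgeSet.mpr <|
      (F.deleteIncidenceSet_le x).lt_of_ne fun h =>
        (SimpleGraph.deleteIncidenceSet_adj.mp (by rw [h]; exact hxy)).2.1 rfl
  exact absurd (hFmin _ hdel) (not_le.mpr hlt)

/-- Let `M` be a module with `G[M]` trivially perfect and
containing an independent set of size at least `2k + 5`, let `I ⊆ M` be an
independent set of size `2k + 4`, and `A = M \ I`. If `F` is a minimum-size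
editing set for `G − A` of size at most `k`, then no vertex of `I` is incident
to any pair of `F`. -/
theorem module_reduction_clean_indep {V : Type*} [Fintype V] [DecidableEq V]
    (G : SimpleGraph V) (k : ℕ) (M : Set V)
    (hM : IsModule G M)
    (hMtp : TriviallyPerfect (G.induce M))
    (hbigIndep : ∃ S : Set V, S ⊆ M ∧ (∀ u ∈ S, ∀ v ∈ S, u ≠ v → ¬G.Adj u v) ∧
      2 * k + 5 ≤ S.ncard)
    (I : Set V) (hIM : I ⊆ M)
    (hIindep : ∀ u ∈ I, ∀ v ∈ I, u ≠ v → ¬G.Adj u v)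
    (hIcard : I.ncard = 2 * k + 4)
    (F : SimpleGraph ((M \ I)ᶜ : Set V))
    (hFtp : TriviallyPerfect (symmDiff (G.induce ((M \ I)ᶜ : Set V)) F))
    (hFmin : ∀ F' : SimpleGraph ((M \ I)ᶜ : Set V),
      TriviallyPerfect (symmDiff (G.induce ((M \ I)ᶜ : Set V)) F') →
      F.edgeSet.ncard ≤ F'.edgeSet.ncard)
    (hFk : F.edgeSet.ncard ≤ k) :
    ∀ x : ((M \ I)ᶜ : Set V), (x : V) ∈ I → ∀ y, ¬F.Adj x y :=
  module_reduction_clean_indep_general G k M hM I hIM hIindep hIcard F hFtp hFmin hFk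
end

section
/- A connected trivially perfect graph on at least two vertices has at least one universal vertex; that is, if G is connected, has no induced P₄ or C₄, and |V(G)| ≥ 2, then there exists a vertex adjacent to all others. -/
/-!
Take a vertex `v` of maximum degree and suppose some vertex is not adjacent to it. By
connectivity there is a path `v - u - w` with `w` not adjacent to `v`. Every other neighbour
`x` of `v` is adjacent to `u`, since otherwise `w u v x` is an induced `P₄` or `C₄`. Hence the
closed neighbourhoods satisfy `N[v] ⊊ N[u]` (as `w ∈ N[u] \ N[v]`), so `u` has larger degree.
-/

namespace SimpleGraph

variable {V : Type*} {G : SimpleGraph V}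

lemma Connected.exists_adj_adj_not_adj (hconn : G.Connected) {v w₀ : V} (hw₀ : w₀ ≠ v)
    (hvw₀ : ¬G.Adj v w₀) : ∃ u w, G.Adj v u ∧ G.Adj u w ∧ ¬G.Adj v w ∧ w ≠ v := by
  obtain ⟨p⟩ := hconn v w₀
  obtain ⟨⟨⟨u, w⟩, huw⟩, -, hu, hw⟩ :=
    p.exists_boundary_dart (insert v (G.neighborSet v)) (Set.mem_insert v _)
      (by simp [hw₀, hvw₀])
  simp only [Set.mem_insert_iff, mem_neighborSet, not_or] at hu hw
  rcases hu with rfl | hvu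
  · exact absurd huw hw.2
  · exact ⟨u, w, hvu, huw, hw.2, hw.1⟩

variable (G) in
lemma ncard_neighborSet [Fintype V] [DecidableRel G.Adj] (v : V) :
    (G.neighborSet v).ncard = G.degree v := by
  rw [Set.ncard_eq_toFinset_card', ← card_neighborFinset_eq_degree]
  rfl

lemma degree_lt_degree_of_insert_neighborSet_ssubset [Fintype V] [DecidableRel G.Adj] {u v : V}
    (h : insert v (G.neighborSet v) ⊂ insert u (G.neighborSet u)) :
    G.degree v < G.degree u := by
  have := Set.ncard_lt_ncard h
  rwa [Set.ncard_insert_of_notMem G.notMem_neighborSet_self,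
    Set.ncard_insert_of_notMem G.notMem_neighborSet_self, ncard_neighborSet,
    ncard_neighborSet, Nat.add_lt_add_iff_right] at this

end SimpleGraph

open SimpleGraph in
lemma TriviallyPerfect.insert_neighborSet_ssubset {V : Type*} {G : SimpleGraph V}
    (hTP : TriviallyPerfect G) {u v w : V} (hvu : G.Adj v u) (huw : G.Adj u w)
    (hvw : ¬G.Adj v w) (hwv : w ≠ v) :
    insert v (G.neighborSet v) ⊂ insert u (G.neighborSet u) := by
  refine Set.ssubset_iff_of_subset ?_ |>.mpr ⟨w, Or.inr huw, by simp [hwv, hvw]⟩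
  rintro x (rfl | hvx)
  · exact Or.inr hvu.symm
  by_cases hxu : x = u
  · exact Or.inl hxu
  by_contra hux
  simp only [Set.mem_insert_iff, mem_neighborSet, hxu, false_or] at hux
  have hwx : w ≠ x := by rintro rfl; exact hvw hvx
  have hwu : w ≠ u := by rintro rfl; exact hvw hvu
  by_cases hwx_adj : G.Adj w x
  · exact (hTP w u v x).2 ⟨huw.symm, hvu.symm, hvx, hwx_adj.symm, fun h => hvw h.symm, hux,
      hwu, hwv, hwx, hvu.ne', Ne.symm hxu, hvx.ne⟩
  · exact (hTP w u v x).1 ⟨huw.symm, hvu.symm, hvx, fun h => hvw h.symm, hwx_adj, hux,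
      hwu, hwv, hwx, hvu.ne', Ne.symm hxu, hvx.ne⟩

theorem connected_triviallyPerfect_has_universal_general {V : Type*} [Fintype V]
    (G : SimpleGraph V) (hconn : G.Connected) (hTP : TriviallyPerfect G) :
    ∃ v : V, ∀ w : V, w ≠ v → G.Adj v w := by
  classical
  have := hconn.nonempty
  obtain ⟨v, hmax⟩ := Finite.exists_max (G.degree ·)
  refine ⟨v, fun w₀ hw₀ => by_contra fun hvw₀ => ?_⟩
  obtain ⟨u, w, hvu, huw, hvw, hwv⟩ := hconn.exists_adj_adj_not_adj hw₀ hvw₀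
  exact (hmax u).not_gt <| SimpleGraph.degree_lt_degree_of_insert_neighborSet_ssubset
    (hTP.insert_neighborSet_ssubset hvu huw hvw hwv)

/-- A connected trivially perfect graph on at least two vertices
has a universal vertex. -/
theorem connected_triviallyPerfect_has_universal {V : Type*} [Fintype V]
    (G : SimpleGraph V) (hconn : G.Connected) (hTP : TriviallyPerfect G)
    (hcard : 2 ≤ Fintype.card V) :
    ∃ v : V, ∀ w : V, w ≠ v → G.Adj v w :=
  connected_triviallyPerfect_has_universal_general G hconn hTP
end
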